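/- arXiv:2409.17739 — 9 statements merged into one kernel-verified Lean document; each statement's English description precedes it below -/
import Mathlib

section
/- Let f be a nonnegative integrable function on a σ-finite measure space (X, μ). Then the decreasing rearrangement f↓ of f is equimeasurable with f: for every measurable function φ: ℝ≥0 → ℝ≥0 with φ(0) = 0, the integral of φ ∘ f over X with respect to μ equals the integral of φ ∘ f↓ over ℝ≥0 with respect to Lebesgue measure. -/
/-!
The law of `f` under `μ` and the law of `f↓` under Lebesgue measure on `(0, ∞)` give the same
mass to every ray `(t, ∞]`, namely `D_f(t)`: for `f` this is the definition, for `f↓` it follows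
from the Galois connection `f↓(r) ≤ t ↔ D_f(t) ≤ r`, which holds because `D_f` is antitone and
right continuous. Integrability makes `D_f(t)` finite for `t > 0`, so on each `(1/n, ∞]` both
laws are finite measures agreeing on a π-system generating the Borel sets, hence they agree on
`(0, ∞]`. The value at `0` is irrelevant because `φ 0 = 0`.
-/

open MeasureTheory Set
open scoped ENNReal

/-- The distribution function `D_f(t) = μ{x : f x > t}`. -/
noncomputable def distFun {X : Type*} [MeasurableSpace X] (μ : Measure X)
    (f : X → ℝ≥0∞) (t : ℝ≥0∞) : ℝ≥0∞ := μ {x | t < f x}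

/-- The decreasing rearrangement `f↓(r) = inf {t > 0 : D_f(t) ≤ r}`. -/
noncomputable def decRearr {X : Type*} [MeasurableSpace X] (μ : Measure X)
    (f : X → ℝ≥0∞) (r : ℝ) : ℝ≥0∞ :=
  sInf {t : ℝ≥0∞ | 0 < t ∧ distFun μ f t ≤ ENNReal.ofReal r}

open Filter Topology

namespace MeasureTheory

theorem Measure.restrict_Ioi_eq_of_measure_Ioi_eq {α : Type*} [TopologicalSpace α]
    [LinearOrder α] [OrderTopology α] [SecondCountableTopology α] [MeasurableSpace α]
    [BorelSpace α] {ν₁ ν₂ : Measure α} {a : α} (ha : ν₁ (Ioi a) ≠ ∞)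
    (h : ∀ b, ν₁ (Ioi b) = ν₂ (Ioi b)) : ν₁.restrict (Ioi a) = ν₂.restrict (Ioi a) := by
  have : IsFiniteMeasure (ν₁.restrict (Ioi a)) := ⟨by simpa [lt_top_iff_ne_top] using ha⟩
  refine ext_of_generate_finite _ (BorelSpace.measurable_eq.trans (borel_eq_generateFrom_Ioi α))
    isPiSystem_Ioi ?_ ?_
  · rintro _ ⟨b, rfl⟩
    simp only [Measure.restrict_apply measurableSet_Ioi, Ioi_inter_Ioi, h]
  · simp only [Measure.restrict_apply_univ, h]

theorem _root_.ENNReal.iUnion_Ioi_inv_nat : ⋃ n : ℕ, Ioi ((n : ℝ≥0∞)⁻¹) = Ioi 0 := by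
  ext x
  simp only [mem_iUnion, mem_Ioi]
  exact ⟨fun ⟨_, hn⟩ => pos_of_gt hn, fun hx => ENNReal.exists_inv_nat_lt hx.ne'⟩

theorem lintegral_eq_of_measure_Ioi_eq {ν₁ ν₂ : Measure ℝ≥0∞}
    (h : ∀ t, ν₁ (Ioi t) = ν₂ (Ioi t)) (hfin : ∀ t ≠ 0, ν₁ (Ioi t) ≠ ∞)
    {φ : ℝ≥0∞ → ℝ≥0∞} (hφ0 : φ 0 = 0) : ∫⁻ y, φ y ∂ν₁ = ∫⁻ y, φ y ∂ν₂ := by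
  have hsupp : φ.support ⊆ Ioi 0 := fun y hy => pos_iff_ne_zero.2 fun h0 => hy (h0 ▸ hφ0)
  have hrestr : ν₁.restrict (Ioi 0) = ν₂.restrict (Ioi 0) := by
    rw [← ENNReal.iUnion_Ioi_inv_nat, Measure.restrict_iUnion_congr]
    exact fun n => Measure.restrict_Ioi_eq_of_measure_Ioi_eq (hfin _ (by simp)) h
  rw [← setLIntegral_eq_of_support_subset hsupp, hrestr, setLIntegral_eq_of_support_subset hsupp]

end MeasureTheory

theorem Real.volume_ofReal_lt_inter_Ioi (a : ℝ≥0∞) :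
    volume ({r : ℝ | ENNReal.ofReal r < a} ∩ Ioi 0) = a := by
  rcases eq_or_ne a ∞ with rfl | ha
  · simp
  · have : {r : ℝ | ENNReal.ofReal r < a} ∩ Ioi 0 = Ioo 0 a.toReal := by
      ext r
      simp only [mem_inter_iff, mem_ofPred_eq, mem_Ioi, mem_Ioo]
      exact ⟨fun h => ⟨h.2, (ENNReal.ofReal_lt_iff_lt_toReal h.2.le ha).1 h.1⟩,
        fun h => ⟨(ENNReal.ofReal_lt_iff_lt_toReal h.1.le ha).2 h.2, h.1⟩⟩
    simp [this, ha]

section Rearrangement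

variable {X : Type*} [MeasurableSpace X] (μ : Measure X) (f : X → ℝ≥0∞)

theorem distFun_antitone : Antitone (distFun μ f) := fun _ _ hst =>
  measure_mono fun _ hx => lt_of_le_of_lt hst hx

theorem distFun_top : distFun μ f ∞ = 0 := by simp [distFun]

theorem distFun_sInf_le {S : Set ℝ≥0∞} {c : ℝ≥0∞} (hS : ∀ s ∈ S, distFun μ f s ≤ c) :
    distFun μ f (sInf S) ≤ c := by
  rcases S.eq_empty_or_nonempty with rfl | hne
  · simp [distFun_top]
  obtain ⟨u, hu, hlim, huS⟩ := exists_seq_tendsto_sInf hne (OrderBot.bddBelow S)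
  have hcover : {x | sInf S < f x} ⊆ ⋃ n, {x | u n < f x} := fun x hx =>
    mem_iUnion.2 (hlim.eventually (gt_mem_nhds hx)).exists
  calc distFun μ f (sInf S) ≤ μ (⋃ n, {x | u n < f x}) := measure_mono hcover
    _ = ⨆ n, distFun μ f (u n) :=
      Monotone.measure_iUnion fun m n hmn x hx => lt_of_le_of_lt (hu hmn) hx
    _ ≤ c := iSup_le fun n => hS _ (huS n)

theorem decRearr_le_iff {t : ℝ≥0∞} {r : ℝ} :
    decRearr μ f r ≤ t ↔ distFun μ f t ≤ ENNReal.ofReal r := by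
  refine ⟨fun h => (distFun_antitone μ f h).trans (distFun_sInf_le μ f fun s hs => hs.2),
    fun h => ?_⟩
  calc decRearr μ f r ≤ sInf (Ioi t) :=
        sInf_le_sInf fun s hs => ⟨pos_of_gt hs, (distFun_antitone μ f hs.le).trans h⟩
    _ = t := isGLB_Ioi.sInf_eq

theorem lt_decRearr_iff {t : ℝ≥0∞} {r : ℝ} :
    t < decRearr μ f r ↔ ENNReal.ofReal r < distFun μ f t := by
  simpa only [not_le] using (decRearr_le_iff μ f).not

theorem decRearr_measurable : Measurable (decRearr μ f) :=
  Antitone.measurable fun _ _ hrs =>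
    sInf_le_sInf fun _ ht => ⟨ht.1, ht.2.trans (ENNReal.ofReal_le_ofReal hrs)⟩

theorem map_decRearr_Ioi (t : ℝ≥0∞) :
    (volume.restrict (Ioi (0 : ℝ))).map (decRearr μ f) (Ioi t) = distFun μ f t := by
  rw [Measure.map_apply (decRearr_measurable μ f) measurableSet_Ioi,
    Measure.restrict_apply' measurableSet_Ioi, ← Real.volume_ofReal_lt_inter_Ioi (distFun μ f t)]
  congr 2
  ext r
  exact lt_decRearr_iff μ f

theorem distFun_ne_top_of_lintegral_ne_top (hf : Measurable f) (hint : ∫⁻ x, f x ∂μ ≠ ∞)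
    {t : ℝ≥0∞} (ht : t ≠ 0) : distFun μ f t ≠ ∞ := by
  rcases eq_or_ne t ∞ with rfl | htop
  · simp [distFun_top]
  · refine ne_top_of_le_ne_top (ENNReal.div_ne_top hint ht) ?_
    exact (measure_mono fun x (hx : t < f x) => hx.le).trans
      (meas_ge_le_lintegral_div hf.aemeasurable ht htop)

end Rearrangement

theorem stmt0_general {X : Type*} [MeasurableSpace X] (μ : Measure X)
    (f : X → ℝ≥0∞) (hf : Measurable f) (hint : ∫⁻ x, f x ∂μ ≠ ∞)
    (φ : ℝ≥0∞ → ℝ≥0∞) (hφ : Measurable φ) (hφ0 : φ 0 = 0) :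
    ∫⁻ x, φ (f x) ∂μ = ∫⁻ r in Set.Ioi (0 : ℝ), φ (decRearr μ f r) := by
  have hmap : ∀ t, μ.map f (Ioi t) = distFun μ f t := fun t =>
    Measure.map_apply hf measurableSet_Ioi
  rw [← lintegral_map hφ hf, ← lintegral_map hφ (decRearr_measurable μ f)]
  refine lintegral_eq_of_measure_Ioi_eq (fun t => ?_) (fun t ht => ?_) hφ0
  · rw [hmap, map_decRearr_Ioi]
  · rw [hmap]
    exact distFun_ne_top_of_lintegral_ne_top μ f hf hint ht

/-- Equimeasurability of a nonnegative integrable function with its decreasing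
rearrangement: for every measurable `φ` with `φ 0 = 0`, the integral of `φ ∘ f` over `X`
equals the integral of `φ ∘ f↓` over `ℝ≥0` with respect to Lebesgue measure. -/
theorem stmt0 {X : Type*} [MeasurableSpace X] (μ : Measure X) [SigmaFinite μ]
    (f : X → ℝ≥0∞) (hf : Measurable f) (hint : ∫⁻ x, f x ∂μ ≠ ∞)
    (φ : ℝ≥0∞ → ℝ≥0∞) (hφ : Measurable φ) (hφ0 : φ 0 = 0) :
    ∫⁻ x, φ (f x) ∂μ = ∫⁻ r in Set.Ioi (0 : ℝ), φ (decRearr μ f r) :=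
  stmt0_general μ f hf hint φ hφ hφ0
end

section
/- Let (X,μ) and (Y,ν) be σ-finite measure spaces, let T : L¹(X,μ) → L¹(Y,ν) be a positive linear map that is subunital (T applied to functions bounded by 1 yields functions bounded by 1) and integral-non-increasing (∫ T f dν ≤ ∫ f dμ for f ≥ 0), and let f ∈ L¹(X,μ)⁺. Then f submajorizes T(f), i.e., L_{Tf}(t) ≤ L_f(t) for all t > 0. -/
/-!
Fix a level `s ≥ 0` and a weight `0 ≤ e ≤ 1` with `∫ e ≤ t`. Splitting
`f = (f - s)⁺ + min f s`, positivity and the integral bound give `∫ e · T (f - s)⁺ ≤ ∫ (f - s)⁺`,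
while subunitality keeps `T (min f s) ≤ s`, so `∫ e · T f ≤ ∫ (f - s)⁺ + s t`.
Conversely, if `s` is where the distribution function `μ {f > s}` crosses `t`, the weight
equal to `1` on `{f > s}` plus a suitable fraction of `{f = s}` attains `∫ (f - s)⁺ + s t`,
so this bound is at most `L_f(t)`.
-/

open MeasureTheory Set
open scoped ENNReal

noncomputable def LorenzR {X : Type*} [MeasurableSpace X] (μ : Measure X)
    (g : X → ℝ) (t : ℝ) : ℝ :=
  sSup {c : ℝ | ∃ e : X → ℝ, Measurable e ∧ Integrable e μ ∧
    (∀ x, 0 ≤ e x ∧ e x ≤ 1) ∧ (∫ x, e x ∂μ) ≤ t ∧ c = ∫ x, e x * g x ∂μ}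

section Weights

variable {X : Type*} [MeasurableSpace X] {μ : Measure X}

lemma MeasureTheory.Integrable.weight_mul {e g : X → ℝ} (hg : Integrable g μ)
    (he : AEStronglyMeasurable e μ) (he01 : ∀ x, e x ∈ Icc 0 1) :
    Integrable (fun x => e x * g x) μ :=
  hg.bdd_mul he (ae_of_all _ fun x => (Real.norm_of_nonneg (he01 x).1).trans_le (he01 x).2)

lemma integral_weight_mul_le_integral {e u : X → ℝ} (hu : Integrable u μ) (hu0 : 0 ≤ᵐ[μ] u)
    (he : AEStronglyMeasurable e μ) (he01 : ∀ x, e x ∈ Icc 0 1) :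
    ∫ x, e x * u x ∂μ ≤ ∫ x, u x ∂μ := by
  refine integral_mono_ae (hu.weight_mul he he01) hu ?_
  filter_upwards [hu0] with x hx
  exact mul_le_of_le_one_left hx (he01 x).2

lemma integral_weight_mul_le_mul_integral {e u : X → ℝ} {s : ℝ} (hu : Integrable u μ)
    (hus : ∀ᵐ x ∂μ, u x ≤ s) (he : Integrable e μ) (he01 : ∀ x, e x ∈ Icc 0 1) :
    ∫ x, e x * u x ∂μ ≤ s * ∫ x, e x ∂μ := by
  rw [← integral_const_mul]
  refine integral_mono_ae (hu.weight_mul he.1 he01) (he.const_mul s) ?_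
  filter_upwards [hus] with x hx
  rw [mul_comm s]
  exact mul_le_mul_of_nonneg_left hx (he01 x).1

lemma MeasureTheory.Integrable.pos_part_sub_const {g : X → ℝ} (hg : Integrable g μ) {s : ℝ}
    (hs : 0 ≤ s) :
    Integrable (fun x => max (g x - s) 0) μ := by
  refine hg.pos_part.mono (by have := hg.1; fun_prop) (ae_of_all _ fun x => ?_)
  simp only [Real.norm_of_nonneg (le_max_right _ _)]
  exact max_le_max (by linarith) le_rfl

lemma integral_weight_mul_eq {e g : X → ℝ} {s : ℝ} (hg : Integrable g μ) (hs : 0 ≤ s)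
    (he : Integrable e μ) (he1 : ∀ x, s < g x → e x = 1) (he0 : ∀ x, g x < s → e x = 0) :
    ∫ x, e x * g x ∂μ = ∫ x, max (g x - s) 0 ∂μ + s * ∫ x, e x ∂μ := by
  have hpt : ∀ x, e x * g x = max (g x - s) 0 + s * e x := by
    intro x
    rcases lt_trichotomy (g x) s with h | h | h
    · rw [he0 x h, max_eq_right (by linarith)]; ring
    · rw [h, sub_self, max_self]; ring
    · rw [he1 x h, max_eq_left (by linarith)]; ring
  rw [integral_congr_ae (ae_of_all _ hpt), integral_add (hg.pos_part_sub_const hs)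
    (he.const_mul s), integral_const_mul]

end Weights

section Threshold

variable {X : Type*} [MeasurableSpace X] {μ : Measure X}

lemma exists_measure_lt_le_ofReal {g : X → ℝ} (hg : Integrable g μ) (hgm : Measurable g) {t : ℝ}
    (ht : 0 < t) : ∃ s : ℝ, 0 ≤ s ∧ μ {x | s < g x} ≤ ENNReal.ofReal t := by
  have hanti : Antitone fun n : ℕ => {x | (n : ℝ) < g x} :=
    fun m n hmn x (hx : (n : ℝ) < g x) => (Nat.cast_le.2 hmn).trans_lt hx
  have hempty : ⋂ n : ℕ, {x | (n : ℝ) < g x} = ∅ :=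
    iInter_eq_empty_iff.2 fun x => (exists_nat_ge (g x)).imp fun _ hn => not_lt.2 hn
  have hlim := hanti.measure_iInter
    (fun n => (measurableSet_lt measurable_const hgm).nullMeasurableSet)
    ⟨1, (hg.measure_gt_lt_top (by norm_num : (0 : ℝ) < (1 : ℕ))).ne⟩
  rw [hempty, measure_empty, eq_comm, ← le_zero_iff] at hlim
  obtain ⟨n, hn⟩ := iInf_lt_iff.1 (hlim.trans_lt (ENNReal.ofReal_pos.2 ht))
  exact ⟨n, n.cast_nonneg, hn.le⟩

lemma exists_threshold {g : X → ℝ} (hg : Integrable g μ) (hgm : Measurable g) {t : ℝ}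
    (ht : 0 < t) : ∃ s : ℝ, 0 ≤ s ∧ μ {x | s < g x} ≤ ENNReal.ofReal t ∧
      (0 < s → ENNReal.ofReal t ≤ μ {x | s ≤ g x}) := by
  set S := {s : ℝ | 0 ≤ s ∧ μ {x | s < g x} ≤ ENNReal.ofReal t}
  have hne : S.Nonempty := exists_measure_lt_le_ofReal hg hgm ht
  have hbdd : BddBelow S := ⟨0, fun _ hs => hs.1⟩
  refine ⟨sInf S, le_csInf hne fun _ hs => hs.1, ?_, fun hpos => ?_⟩
  · obtain ⟨u, hu_anti, hu_lim, hu_mem⟩ := exists_seq_tendsto_sInf hne hbdd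
    have hmono : Monotone fun n => {x | u n < g x} :=
      fun m n hmn x hx => lt_of_le_of_lt (hu_anti hmn) hx
    calc μ {x | sInf S < g x} ≤ μ (⋃ n, {x | u n < g x}) :=
          measure_mono fun x hx => mem_iUnion.2 (hu_lim.eventually (gt_mem_nhds hx)).exists
      _ = ⨆ n, μ {x | u n < g x} := hmono.measure_iUnion
      _ ≤ ENNReal.ofReal t := iSup_le fun n => (hu_mem n).2
  · obtain ⟨v, hv_mono, hv_mem, hv_lim⟩ := exists_seq_strictMono_tendsto' hpos
    have hanti : Antitone fun n => {x | v n < g x} :=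
      fun m n hmn x hx => lt_of_le_of_lt (hv_mono.monotone hmn) hx
    calc ENNReal.ofReal t ≤ ⨅ n, μ {x | v n < g x} :=
          le_iInf fun n => le_of_not_ge fun h =>
            notMem_of_lt_csInf (hv_mem n).2 hbdd ⟨(hv_mem n).1.le, h⟩
      _ = μ (⋂ n, {x | v n < g x}) :=
          (hanti.measure_iInter (fun n => (measurableSet_lt measurable_const hgm).nullMeasurableSet)
            ⟨0, (hg.measure_gt_lt_top (hv_mem 0).1).ne⟩).symm
      _ ≤ μ {x | sInf S ≤ g x} :=
          measure_mono fun x hx => le_of_tendsto' hv_lim fun n => (mem_iInter.1 hx n).le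

end Threshold

section Lorenz

variable {X : Type*} [MeasurableSpace X] {μ : Measure X}

lemma le_lorenzR {e g : X → ℝ} {t : ℝ} (hg : Integrable g μ) (he : Measurable e)
    (hei : Integrable e μ) (he01 : ∀ x, e x ∈ Icc 0 1) (het : ∫ x, e x ∂μ ≤ t) :
    ∫ x, e x * g x ∂μ ≤ LorenzR μ g t := by
  refine le_csSup ⟨∫ x, |g x| ∂μ, ?_⟩ ⟨e, he, hei, he01, het, rfl⟩
  rintro _ ⟨e', -, hei', he01', -, rfl⟩
  refine integral_mono (hg.weight_mul hei'.1 he01') hg.abs fun x => ?_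
  exact (mul_le_mul_of_nonneg_left (le_abs_self _) (he01' x).1).trans
    (mul_le_of_le_one_left (abs_nonneg _) (he01' x).2)

lemma lorenzR_le {g : X → ℝ} {t c : ℝ} (ht : 0 ≤ t)
    (h : ∀ e : X → ℝ, Measurable e → Integrable e μ → (∀ x, e x ∈ Icc 0 1) →
      ∫ x, e x ∂μ ≤ t → ∫ x, e x * g x ∂μ ≤ c) :
    LorenzR μ g t ≤ c := by
  refine csSup_le ⟨_, 0, measurable_const, integrable_zero _ _ _, fun _ => by simp,
    by simpa using ht, rfl⟩ ?_
  rintro _ ⟨e, he, hei, he01, het, rfl⟩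
  exact h e he hei he01 het

/-- The weight is `1` on `{s < g}` plus the fraction of the level set `{g = s}` that brings
its mass up to `t`. -/
lemma exists_level_weight_of_pos {g : X → ℝ} (hg : Integrable g μ) (hgm : Measurable g)
    {s t : ℝ} (hs : 0 < s) (ht : 0 ≤ t) (hlt : μ {x | s < g x} ≤ ENNReal.ofReal t)
    (hle : ENNReal.ofReal t ≤ μ {x | s ≤ g x}) :
    ∃ e : X → ℝ, Measurable e ∧ Integrable e μ ∧ (∀ x, e x ∈ Icc 0 1) ∧ ∫ x, e x ∂μ = t ∧
      (∀ x, s < g x → e x = 1) ∧ (∀ x, g x < s → e x = 0) := by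
  set A := {x | s < g x}
  set B := {x | g x = s}
  have hAm : MeasurableSet A := measurableSet_lt measurable_const hgm
  have hBm : MeasurableSet B := measurableSet_eq_fun hgm measurable_const
  have hAfin : μ A ≠ ∞ := ne_top_of_le_ne_top ENNReal.ofReal_ne_top hlt
  have hBfin : μ B ≠ ∞ :=
    ne_top_of_le_ne_top (hg.measure_ge_lt_top hs).ne (measure_mono fun x (hx : g x = s) => hx.ge)
  have hU : {x | s ≤ g x} = A ∪ B := by
    ext x; simp [A, B, le_iff_lt_or_eq, eq_comm]
  have hat : μ.real A ≤ t := ENNReal.toReal_le_of_le_ofReal ht hlt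
  have htab : t ≤ μ.real A + μ.real B :=
    calc t ≤ μ.real {x | s ≤ g x} :=
          (ENNReal.ofReal_le_iff_le_toReal (hU ▸ measure_union_ne_top hAfin hBfin)).1 hle
      _ ≤ μ.real A + μ.real B := hU ▸ measureReal_union_le A B
  set θ := (t - μ.real A) / μ.real B
  have hθ : θ ∈ Icc (0 : ℝ) 1 :=
    ⟨div_nonneg (by linarith) measureReal_nonneg,
      div_le_one_of_le₀ (by linarith) measureReal_nonneg⟩
  have hθt : μ.real A + μ.real B * θ = t := by
    rcases eq_or_ne (μ.real B) 0 with hb | hb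
    · rw [hb] at htab ⊢; linarith
    · rw [mul_div_cancel₀ _ hb]; ring
  have hiA := (integrable_indicator_iff hAm).2 (integrableOn_const (C := (1 : ℝ)) hAfin)
  have hiB := (integrable_indicator_iff hBm).2 (integrableOn_const (C := θ) hBfin)
  refine ⟨fun x => A.indicator (fun _ => 1) x + B.indicator (fun _ => θ) x,
    (measurable_const.indicator hAm).add (measurable_const.indicator hBm), hiA.add hiB,
    fun x => ?_, ?_, fun x hx => ?_, fun x hx => ?_⟩
  · rcases lt_trichotomy (g x) s with h | h | h
    · simp [A, B, indicator, h.not_gt, h.ne]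
    · simpa [A, B, indicator, h] using hθ
    · simp [A, B, indicator, h, h.ne']
  · rw [integral_add hiA hiB, integral_indicator_const _ hAm, integral_indicator_const _ hBm]
    simpa using hθt
  · simp [A, B, indicator, hx, hx.ne']
  · simp [A, B, indicator, hx.not_gt, hx.ne]

lemma exists_le_lorenzR {g : X → ℝ} (hg : Integrable g μ) (hgm : Measurable g) {t : ℝ}
    (ht : 0 < t) : ∃ s, 0 ≤ s ∧ ∫ x, max (g x - s) 0 ∂μ + s * t ≤ LorenzR μ g t := by
  obtain ⟨s, hs, hlt, hle⟩ := exists_threshold hg hgm ht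
  refine ⟨s, hs, ?_⟩
  rcases hs.eq_or_lt with rfl | hs
  · set A := {x | 0 < g x}
    have hAm : MeasurableSet A := measurableSet_lt measurable_const hgm
    have hiA := (integrable_indicator_iff hAm).2
      (integrableOn_const (C := (1 : ℝ)) (ne_top_of_le_ne_top ENNReal.ofReal_ne_top hlt))
    have hval := integral_weight_mul_eq hg le_rfl hiA (fun x (hx : 0 < g x) => by simp [A, hx])
      fun x hx => by simp [A, hx.not_gt]
    calc ∫ x, max (g x - 0) 0 ∂μ + 0 * t = ∫ x, A.indicator (fun _ => 1) x * g x ∂μ := by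
          rw [hval, zero_mul, zero_mul]
      _ ≤ LorenzR μ g t := le_lorenzR hg (measurable_const.indicator hAm) hiA (fun x => ?_) ?_
    · by_cases hx : x ∈ A <;> simp [hx]
    · rw [integral_indicator_const _ hAm, smul_eq_mul, mul_one]
      exact ENNReal.toReal_le_of_le_ofReal ht.le hlt
  · obtain ⟨e, he, hei, he01, het, he1, he0⟩ :=
      exists_level_weight_of_pos hg hgm hs ht.le hlt (hle hs)
    calc ∫ x, max (g x - s) 0 ∂μ + s * t = ∫ x, e x * g x ∂μ := by
          rw [integral_weight_mul_eq hg hs.le hei he1 he0, het]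
      _ ≤ LorenzR μ g t := le_lorenzR hg he hei he01 het.le

end Lorenz

structure IsDoublySubstochastic {X Y : Type*} [MeasurableSpace X] [MeasurableSpace Y]
    {μ : Measure X} {ν : Measure Y} (T : Lp ℝ 1 μ →ₗ[ℝ] Lp ℝ 1 ν) : Prop where
  nonneg : ∀ h : Lp ℝ 1 μ, 0 ≤ h → 0 ≤ T h
  ae_le_one : ∀ h : Lp ℝ 1 μ, (∀ᵐ x ∂μ, 0 ≤ h x ∧ h x ≤ 1) → ∀ᵐ y ∂ν, T h y ≤ 1
  integral_le : ∀ h : Lp ℝ 1 μ, 0 ≤ h → ∫ y, T h y ∂ν ≤ ∫ x, h x ∂μ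

namespace IsDoublySubstochastic

variable {X Y : Type*} [MeasurableSpace X] [MeasurableSpace Y] {μ : Measure X} {ν : Measure Y}
  {T : Lp ℝ 1 μ →ₗ[ℝ] Lp ℝ 1 ν}

lemma ae_le_const (hT : IsDoublySubstochastic T) {h : Lp ℝ 1 μ} {s : ℝ} (hs : 0 ≤ s)
    (hh : ∀ᵐ x ∂μ, 0 ≤ h x ∧ h x ≤ s) : ∀ᵐ y ∂ν, T h y ≤ s := by
  rcases hs.eq_or_lt with rfl | hs
  · have h0 : h = 0 := Lp.eq_zero_iff_ae_eq_zero.2 (hh.mono fun x hx => le_antisymm hx.2 hx.1)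
    filter_upwards [Lp.coeFn_zero ℝ 1 ν] with y hy
    rw [h0, map_zero, hy, Pi.zero_apply]
  · have hscaled : ∀ᵐ x ∂μ, 0 ≤ (s⁻¹ • h) x ∧ (s⁻¹ • h) x ≤ 1 := by
      filter_upwards [Lp.coeFn_smul s⁻¹ h, hh] with x hx hhx
      rw [hx, Pi.smul_apply, smul_eq_mul, inv_mul_le_one₀ hs]
      exact ⟨mul_nonneg (inv_nonneg.2 hs.le) hhx.1, hhx.2⟩
    filter_upwards [hT.ae_le_one _ hscaled, Lp.coeFn_smul s⁻¹ (T h)] with y hy hTy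
    rw [map_smul, hTy, Pi.smul_apply, smul_eq_mul, inv_mul_le_one₀ hs] at hy
    exact hy

lemma integral_weight_mul_le (hT : IsDoublySubstochastic T) {e : Y → ℝ}
    (he : AEStronglyMeasurable e ν) (he01 : ∀ y, e y ∈ Icc 0 1) {h : Lp ℝ 1 μ} (hh : 0 ≤ h) :
    ∫ y, e y * T h y ∂ν ≤ ∫ x, h x ∂μ :=
  (integral_weight_mul_le_integral (L1.integrable_coeFn _)
    ((Lp.coeFn_nonneg _).2 (hT.nonneg h hh)) he he01).trans (hT.integral_le h hh)

lemma integral_weight_mul_map_le (hT : IsDoublySubstochastic T) {f : Lp ℝ 1 μ} (hf : 0 ≤ f)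
    {s : ℝ} (hs : 0 ≤ s) {e : Y → ℝ} (he : Integrable e ν) (he01 : ∀ y, e y ∈ Icc 0 1) :
    ∫ y, e y * T f y ∂ν ≤ ∫ x, max (f x - s) 0 ∂μ + s * ∫ y, e y ∂ν := by
  have hf0 : 0 ≤ᵐ[μ] f := (Lp.coeFn_nonneg f).2 hf
  set G : Lp ℝ 1 μ :=
    (memLp_one_iff_integrable.2 ((L1.integrable_coeFn f).pos_part_sub_const hs)).toLp _
  have hG : G =ᵐ[μ] fun x => max (f x - s) 0 := MemLp.coeFn_toLp _
  have hG0 : 0 ≤ G := (Lp.coeFn_nonneg G).1 (hG.mono fun x hx => hx ▸ le_max_right _ _)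
  have hH : ∀ᵐ x ∂μ, 0 ≤ (f - G) x ∧ (f - G) x ≤ s := by
    filter_upwards [Lp.coeFn_sub f G, hG, hf0] with x hx hGx hfx
    rw [hx, Pi.sub_apply, hGx]
    exact ⟨sub_nonneg.2 (max_le (by linarith) hfx), by linarith [le_max_left (f x - s) 0]⟩
  have hsplit : ∫ y, e y * T f y ∂ν = ∫ y, e y * T G y ∂ν + ∫ y, e y * T (f - G) y ∂ν := by
    rw [← integral_add ((L1.integrable_coeFn _).weight_mul he.1 he01)
      ((L1.integrable_coeFn _).weight_mul he.1 he01)]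
    refine integral_congr_ae ?_
    filter_upwards [Lp.coeFn_add (T G) (T (f - G))] with y hy
    rw [← map_add, add_sub_cancel] at hy
    rw [hy, Pi.add_apply, mul_add]
  calc ∫ y, e y * T f y ∂ν
      = ∫ y, e y * T G y ∂ν + ∫ y, e y * T (f - G) y ∂ν := hsplit
    _ ≤ ∫ x, G x ∂μ + s * ∫ y, e y ∂ν := add_le_add (hT.integral_weight_mul_le he.1 he01 hG0)
        (integral_weight_mul_le_mul_integral (L1.integrable_coeFn _) (hT.ae_le_const hs hH) he he01)
    _ = ∫ x, max (f x - s) 0 ∂μ + s * ∫ y, e y ∂ν := by rw [integral_congr_ae hG]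

end IsDoublySubstochastic

theorem stmt2_general {X Y : Type*} [MeasurableSpace X] [MeasurableSpace Y]
    (μ : Measure X) (ν : Measure Y)
    (T : Lp ℝ 1 μ →ₗ[ℝ] Lp ℝ 1 ν)
    (hpos : ∀ h : Lp ℝ 1 μ, 0 ≤ h → 0 ≤ T h)
    (hsub : ∀ h : Lp ℝ 1 μ, (∀ᵐ x ∂μ, 0 ≤ h x ∧ h x ≤ 1) →
      (∀ᵐ y ∂ν, (T h) y ≤ 1))
    (hint : ∀ h : Lp ℝ 1 μ, 0 ≤ h → ∫ y, (T h) y ∂ν ≤ ∫ x, h x ∂μ)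
    (f : Lp ℝ 1 μ) (hfpos : 0 ≤ f) :
    ∀ t : ℝ, 0 < t → LorenzR ν (⇑(T f)) t ≤ LorenzR μ (⇑f) t := by
  intro t ht
  have hT : IsDoublySubstochastic T := ⟨hpos, hsub, hint⟩
  obtain ⟨s, hs, hLf⟩ :=
    exists_le_lorenzR (L1.integrable_coeFn f) (Lp.stronglyMeasurable f).measurable ht
  refine lorenzR_le ht.le fun e _ hei he01 het => ?_
  calc ∫ y, e y * T f y ∂ν ≤ ∫ x, max (f x - s) 0 ∂μ + s * ∫ y, e y ∂ν :=
        hT.integral_weight_mul_map_le hfpos hs hei he01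
    _ ≤ ∫ x, max (f x - s) 0 ∂μ + s * t := by gcongr
    _ ≤ LorenzR μ f t := hLf

/-- A doubly substochastic map `T : L¹(X,μ) → L¹(Y,ν)` (positive, subunital,
integral-non-increasing) produces an output submajorized by the input:
`L_{Tf}(t) ≤ L_f(t)` for all `t > 0`. -/
theorem stmt2 {X Y : Type*} [MeasurableSpace X] [MeasurableSpace Y]
    (μ : Measure X) (ν : Measure Y) [SigmaFinite μ] [SigmaFinite ν]
    (T : Lp ℝ 1 μ →ₗ[ℝ] Lp ℝ 1 ν)
    (hpos : ∀ h : Lp ℝ 1 μ, 0 ≤ h → 0 ≤ T h)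
    (hsub : ∀ h : Lp ℝ 1 μ, (∀ᵐ x ∂μ, 0 ≤ h x ∧ h x ≤ 1) →
      (∀ᵐ y ∂ν, (T h) y ≤ 1))
    (hint : ∀ h : Lp ℝ 1 μ, 0 ≤ h → ∫ y, (T h) y ∂ν ≤ ∫ x, h x ∂μ)
    (f : Lp ℝ 1 μ) (hfpos : 0 ≤ f) :
    ∀ t : ℝ, 0 < t → LorenzR ν (⇑(T f)) t ≤ LorenzR μ (⇑f) t :=
  stmt2_general μ ν T hpos hsub hint f hfpos
end

section
/- Let (X,μ) and (Y,ν) be σ-finite measure spaces and let f ∈ L¹(X,μ)⁺, g ∈ L¹(Y,ν)⁺. Then f submajorizes g (i.e., L_f(t) ≥ L_g(t) for all t > 0) if and only if ∫_X (f − t)₊ dμ ≥ ∫_Y (g − t)₊ dν for all t ≥ 0. -/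
/-!
For `t > 0` the Lorenz curve is a Legendre-type transform of the tail integrals,
`L_f(t) = min_s (∫ (f - s)₊ + s t)`: every admissible weight `e` gives
`∫ e f ≤ ∫ (f - s)₊ + s ∫ e` (bound `e f ≤ (f - s)₊ + s e` pointwise), and the minimum is
attained by the bathtub weight, equal to `1` on `{f > s}` and to a constant on `{f = s}`, at the
level `s` where the distribution function `μ {f > s}` crosses `t`. Conversely
`∫ (g - t)₊ + t ν{g > t} = ∫_{g > t} g ≤ L_g(ν{g > t})`. So comparing Lorenz curves compares
tail integrals and vice versa; the tail at `t = 0` follows by monotone convergence.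
-/

open MeasureTheory Set
open scoped ENNReal

/-- The Lorenz curve of `f`, via the variational formula
`L_f(t) = sup { ∫ e·f dμ : e measurable, 0 ≤ e ≤ 1, ∫ e dμ ≤ t }`. -/
noncomputable def LorenzE {X : Type*} [MeasurableSpace X] (μ : Measure X)
    (f : X → ℝ≥0∞) (t : ℝ) : ℝ≥0∞ :=
  sSup {c : ℝ≥0∞ | ∃ e : X → ℝ≥0∞, Measurable e ∧ (∀ x, e x ≤ 1) ∧
    (∫⁻ x, e x ∂μ) ≤ ENNReal.ofReal t ∧ c = ∫⁻ x, e x * f x ∂μ}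

section

variable {X Y : Type*} [MeasurableSpace X] [MeasurableSpace Y] {μ : Measure X} {ν : Measure Y}
  {f : X → ℝ≥0∞} {g : Y → ℝ≥0∞}

lemma measure_setOf_le_ne_top (hf : Measurable f) (hfi : ∫⁻ x, f x ∂μ ≠ ∞) {s : ℝ≥0∞}
    (hs : s ≠ 0) : μ {x | s ≤ f x} ≠ ∞ := by
  intro htop
  have := mul_meas_ge_le_lintegral hf (μ := μ) s
  rw [htop, ENNReal.mul_top hs, top_le_iff] at this
  exact hfi this

lemma lintegral_tsub_add_mul_measure_eq (hf : Measurable f) (s : ℝ≥0∞) :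
    ∫⁻ x, f x - s ∂μ + s * μ {x | s < f x} = ∫⁻ x in {x | s < f x}, f x ∂μ := by
  have hA : MeasurableSet {x | s < f x} := hf measurableSet_Ioi
  have hsupp : Function.support (fun x ↦ f x - s) ⊆ {x | s < f x} := fun x hx ↦
    tsub_pos_iff_lt.1 (pos_iff_ne_zero.2 hx)
  rw [← setLIntegral_eq_of_support_subset hsupp, ← setLIntegral_const,
    ← lintegral_add_right _ measurable_const]
  exact setLIntegral_congr_fun hA fun x hx ↦ tsub_add_cancel_of_le (le_of_lt hx)

lemma lintegral_mul_le_lorenzE {e : X → ℝ≥0∞} (he : Measurable e) (he1 : ∀ x, e x ≤ 1)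
    {t : ℝ} (het : ∫⁻ x, e x ∂μ ≤ ENNReal.ofReal t) :
    ∫⁻ x, e x * f x ∂μ ≤ LorenzE μ f t :=
  le_sSup ⟨e, he, he1, het, rfl⟩

lemma setLIntegral_le_lorenzE {A : Set X} (hA : MeasurableSet A) {t : ℝ}
    (hAt : μ A ≤ ENNReal.ofReal t) : ∫⁻ x in A, f x ∂μ ≤ LorenzE μ f t := by
  have h := lintegral_mul_le_lorenzE (f := f) (measurable_one.indicator hA)
    (fun x ↦ indicator_apply_le' (fun _ ↦ le_rfl) (fun _ ↦ zero_le_one))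
    ((lintegral_indicator_one hA).trans_le hAt)
  have hmul : ∀ x, A.indicator 1 x * f x = A.indicator f x := fun x ↦ by
    by_cases hx : x ∈ A <;> simp [hx]
  rwa [lintegral_congr hmul, lintegral_indicator hA] at h

lemma lorenzE_le_lintegral_tsub_add_mul (hf : Measurable f) (s : ℝ≥0∞) (t : ℝ) :
    LorenzE μ f t ≤ ∫⁻ x, f x - s ∂μ + s * ENNReal.ofReal t := by
  refine sSup_le ?_
  rintro c ⟨e, he, he1, het, rfl⟩
  have hpt : ∀ x, e x * f x ≤ (f x - s) + s * e x := fun x ↦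
    calc e x * f x ≤ e x * ((f x - s) + s) := by gcongr; exact le_tsub_add
      _ = e x * (f x - s) + s * e x := by ring
      _ ≤ (f x - s) + s * e x := by gcongr; exact mul_le_of_le_one_left zero_le (he1 x)
  calc ∫⁻ x, e x * f x ∂μ ≤ ∫⁻ x, (f x - s) + s * e x ∂μ := lintegral_mono hpt
    _ = ∫⁻ x, f x - s ∂μ + s * ∫⁻ x, e x ∂μ := by
      rw [lintegral_add_left (f := fun x ↦ f x - s) (hf.sub measurable_const),
        lintegral_const_mul s he]
    _ ≤ ∫⁻ x, f x - s ∂μ + s * ENNReal.ofReal t := by gcongr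

lemma measure_lt_le_of_forall_gt {a T : ℝ≥0∞} (h : ∀ s, a < s → μ {x | s < f x} ≤ T) :
    μ {x | a < f x} ≤ T := by
  rcases eq_or_ne a ∞ with rfl | ha
  · simp
  obtain ⟨u, hu_anti, hu_mem, hu_lim⟩ := exists_seq_strictAnti_tendsto' ha.lt_top
  have hunion : {x | a < f x} = ⋃ n, {x | u n < f x} := by
    ext x
    simp only [mem_ofPred_eq, mem_iUnion]
    exact ⟨fun hx ↦ (hu_lim.eventually (gt_mem_nhds hx)).exists,
      fun ⟨n, hn⟩ ↦ (hu_mem n).1.trans hn⟩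
  have hmono : Monotone fun n ↦ {x | u n < f x} := fun m n hmn x hx ↦
    (hu_anti.antitone hmn).trans_lt hx
  rw [hunion, hmono.measure_iUnion]
  exact iSup_le fun n ↦ h _ (hu_mem n).1

lemma le_measure_le_of_forall_lt (hf : Measurable f) (hfi : ∫⁻ x, f x ∂μ ≠ ∞)
    {a T : ℝ≥0∞} (ha : a ≠ 0) (h : ∀ s < a, T ≤ μ {x | s < f x}) :
    T ≤ μ {x | a ≤ f x} := by
  obtain ⟨u, hu_mono, hu_mem, hu_lim⟩ := exists_seq_strictMono_tendsto' (pos_iff_ne_zero.2 ha)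
  have hinter : {x | a ≤ f x} = ⋂ n, {x | u n < f x} := by
    ext x
    simp only [mem_ofPred_eq, mem_iInter]
    exact ⟨fun hx n ↦ (hu_mem n).2.trans_le hx,
      fun hx ↦ le_of_tendsto' hu_lim fun n ↦ (hx n).le⟩
  have hanti : Antitone fun n ↦ {x | u n < f x} := fun m n hmn x hx ↦
    (hu_mono.monotone hmn).trans_lt hx
  have hfin : μ {x | u 0 < f x} ≠ ∞ :=
    ne_top_of_le_ne_top (measure_setOf_le_ne_top hf hfi (hu_mem 0).1.ne')
      (measure_mono (ofPred_subset_ofPred.2 fun x ↦ le_of_lt))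
  rw [hinter, hanti.measure_iInter (fun n ↦ (hf measurableSet_Ioi).nullMeasurableSet) ⟨0, hfin⟩]
  exact le_iInf fun n ↦ h _ (hu_mem n).2

lemma ENNReal.exists_le_one_mul_eq {b c : ℝ≥0∞} (hcb : c ≤ b) (hb : b ≠ ∞) :
    ∃ r ≤ 1, r * b = c := by
  rcases eq_or_ne b 0 with rfl | hb0
  · exact ⟨0, zero_le_one, by rw [zero_mul, nonpos_iff_eq_zero.1 hcb]⟩
  · exact ⟨c / b, ENNReal.div_le_of_le_mul (by rwa [one_mul]), ENNReal.div_mul_cancel hb0 hb⟩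

lemma exists_bathtub_level (hf : Measurable f) (hfi : ∫⁻ x, f x ∂μ ≠ ∞) (T : ℝ≥0∞) :
    ∃ s, μ {x | s < f x} ≤ T ∧ (s ≠ 0 → T ≤ μ {x | s ≤ f x}) := by
  set S := {r | μ {x | r < f x} ≤ T}
  refine ⟨sInf S, measure_lt_le_of_forall_gt fun r hr ↦ ?_, fun hs ↦ ?_⟩
  · obtain ⟨r', hr'T, hr'r⟩ := sInf_lt_iff.1 hr
    exact (measure_mono (ofPred_subset_ofPred.2 fun x ↦ hr'r.trans)).trans hr'T
  · exact le_measure_le_of_forall_lt hf hfi hs fun r hr ↦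
      (not_le.1 fun hrT ↦ (sInf_le (show r ∈ S from hrT)).not_gt hr).le

lemma lintegral_tsub_add_mul_le_lorenzE (hf : Measurable f) (hfi : ∫⁻ x, f x ∂μ ≠ ∞)
    {s : ℝ≥0∞} (hs : s ≠ 0) {t : ℝ} (hlt : μ {x | s < f x} ≤ ENNReal.ofReal t)
    (hle : ENNReal.ofReal t ≤ μ {x | s ≤ f x}) :
    ∫⁻ x, f x - s ∂μ + s * ENNReal.ofReal t ≤ LorenzE μ f t := by
  set T := ENNReal.ofReal t
  set A := {x | s < f x}
  set B := {x | f x = s}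
  have hA : MeasurableSet A := hf measurableSet_Ioi
  have hB : MeasurableSet B := hf (measurableSet_singleton s)
  have hAB : Disjoint A B := disjoint_left.2 fun x hxA hxB ↦ hxA.ne' hxB
  have hunion : {x | s ≤ f x} = A ∪ B := by
    ext x
    simp only [mem_ofPred_eq, mem_union, A, B, le_iff_lt_or_eq, eq_comm]
  have hBfin : μ B ≠ ∞ := ne_top_of_le_ne_top (measure_setOf_le_ne_top hf hfi hs)
    (measure_mono (hunion ▸ subset_union_right))
  have hTA : T - μ A ≤ μ B := by
    rw [hunion, measure_union hAB hB] at hle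
    exact tsub_le_iff_left.2 hle
  obtain ⟨r, hr1, hrB⟩ := ENNReal.exists_le_one_mul_eq hTA hBfin
  set e := A.indicator 1 + B.indicator fun _ ↦ r
  have he : Measurable e := (measurable_one.indicator hA).add (measurable_const.indicator hB)
  have he1 : ∀ x, e x ≤ 1 := fun x ↦ by
    by_cases hxA : x ∈ A
    · simp [e, hxA, disjoint_left.1 hAB hxA]
    · by_cases hxB : x ∈ B <;> simp [e, hxA, hxB, hr1]
  have heT : ∫⁻ x, e x ∂μ = T := by
    simp only [e, Pi.add_apply]
    rw [lintegral_add_left (measurable_one.indicator hA), lintegral_indicator_one hA,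
      lintegral_indicator_const hB, hrB, add_tsub_cancel_of_le hlt]
  have hef : ∀ x, e x * f x = A.indicator f x + B.indicator (fun _ ↦ r * s) x := fun x ↦ by
    by_cases hxA : x ∈ A
    · simp [e, hxA, disjoint_left.1 hAB hxA]
    · by_cases hxB : x ∈ B
      · simp [e, hxA, hxB, show f x = s from hxB]
      · simp [e, hxA, hxB]
  calc ∫⁻ x, f x - s ∂μ + s * T = ∫⁻ x, f x - s ∂μ + s * μ A + s * (T - μ A) := by
        rw [add_assoc, ← mul_add, add_tsub_cancel_of_le hlt]
    _ = ∫⁻ x, e x * f x ∂μ := by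
        rw [lintegral_tsub_add_mul_measure_eq hf, lintegral_congr hef,
          lintegral_add_left (hf.indicator hA), lintegral_indicator hA,
          lintegral_indicator_const hB, ← hrB]
        ring
    _ ≤ LorenzE μ f t := lintegral_mul_le_lorenzE he he1 heT.le

lemma exists_lintegral_tsub_add_mul_le_lorenzE (hf : Measurable f) (hfi : ∫⁻ x, f x ∂μ ≠ ∞)
    (t : ℝ) : ∃ s, ∫⁻ x, f x - s ∂μ + s * ENNReal.ofReal t ≤ LorenzE μ f t := by
  obtain ⟨s, hlt, hle⟩ := exists_bathtub_level hf hfi (μ := μ) (ENNReal.ofReal t)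
  rcases eq_or_ne s 0 with rfl | hs
  · refine ⟨0, ?_⟩
    calc ∫⁻ x, f x - 0 ∂μ + 0 * ENNReal.ofReal t
        = ∫⁻ x, f x - 0 ∂μ + 0 * μ {x | 0 < f x} := by simp only [zero_mul]
      _ = ∫⁻ x in {x | 0 < f x}, f x ∂μ := lintegral_tsub_add_mul_measure_eq hf 0
      _ ≤ LorenzE μ f t := setLIntegral_le_lorenzE (hf measurableSet_Ioi) hlt
  · exact ⟨s, lintegral_tsub_add_mul_le_lorenzE hf hfi hs hlt (hle hs)⟩

lemma lintegral_tsub_le_of_lorenzE_le (hf : Measurable f) (hg : Measurable g)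
    (hgi : ∫⁻ y, g y ∂ν ≠ ∞) (hL : ∀ t : ℝ, 0 < t → LorenzE ν g t ≤ LorenzE μ f t)
    {t : ℝ≥0∞} (ht : t ≠ 0) : ∫⁻ y, g y - t ∂ν ≤ ∫⁻ x, f x - t ∂μ := by
  rcases eq_or_ne t ∞ with rfl | htop
  · simp
  set A := {y | t < g y}
  have hAfin : ν A ≠ ∞ := ne_top_of_le_ne_top (measure_setOf_le_ne_top hg hgi ht)
    (measure_mono (ofPred_subset_ofPred.2 fun y ↦ le_of_lt))
  rcases eq_or_ne (ν A) 0 with hA0 | hA0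
  · calc ∫⁻ y, g y - t ∂ν ≤ ∫⁻ y, g y - t ∂ν + t * ν A := le_self_add
      _ = ∫⁻ y in A, g y ∂ν := lintegral_tsub_add_mul_measure_eq hg t
      _ = 0 := by rw [Measure.restrict_eq_zero.2 hA0, lintegral_zero_measure]
      _ ≤ ∫⁻ x, f x - t ∂μ := zero_le
  have hτ : ENNReal.ofReal (ν A).toReal = ν A := ENNReal.ofReal_toReal hAfin
  refine (ENNReal.add_le_add_iff_right (ENNReal.mul_ne_top htop hAfin)).1 ?_
  calc ∫⁻ y, g y - t ∂ν + t * ν A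
        = ∫⁻ y in A, g y ∂ν := lintegral_tsub_add_mul_measure_eq hg t
    _ ≤ LorenzE ν g (ν A).toReal := setLIntegral_le_lorenzE (hg measurableSet_Ioi) hτ.ge
    _ ≤ LorenzE μ f (ν A).toReal := hL _ (ENNReal.toReal_pos hA0 hAfin)
    _ ≤ ∫⁻ x, f x - t ∂μ + t * ν A := by
        simpa only [hτ] using lorenzE_le_lintegral_tsub_add_mul hf t (μ := μ) (ν A).toReal

lemma lintegral_le_of_forall_lintegral_tsub_le (hg : Measurable g)
    (h : ∀ t ≠ 0, ∫⁻ y, g y - t ∂ν ≤ ∫⁻ x, f x - t ∂μ) : ∫⁻ y, g y ∂ν ≤ ∫⁻ x, f x ∂μ := by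
  have hinv : Antitone fun n : ℕ ↦ (n : ℝ≥0∞)⁻¹ := fun m n hmn ↦
    ENNReal.inv_le_inv.2 (Nat.cast_le.2 hmn)
  have hsup : ∀ y, g y = ⨆ n : ℕ, g y - (n : ℝ≥0∞)⁻¹ := fun y ↦ by
    rw [← ENNReal.sub_iInf, iInf_eq_of_tendsto hinv ENNReal.tendsto_inv_nat_nhds_zero, tsub_zero]
  calc ∫⁻ y, g y ∂ν = ∫⁻ y, ⨆ n : ℕ, g y - (n : ℝ≥0∞)⁻¹ ∂ν := lintegral_congr hsup
    _ = ⨆ n : ℕ, ∫⁻ y, g y - (n : ℝ≥0∞)⁻¹ ∂ν :=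
        lintegral_iSup (fun n ↦ hg.sub measurable_const) fun m n hmn y ↦
          tsub_le_tsub_left (hinv hmn) _
    _ ≤ ∫⁻ x, f x ∂μ := iSup_le fun n ↦
        (h _ (ENNReal.inv_ne_zero.2 (ENNReal.natCast_ne_top n))).trans
          (lintegral_mono fun x ↦ tsub_le_self)

end

theorem stmt3_general {X Y : Type*} [MeasurableSpace X] [MeasurableSpace Y]
    (μ : Measure X) (ν : Measure Y)
    (f : X → ℝ≥0∞) (g : Y → ℝ≥0∞) (hf : Measurable f) (hg : Measurable g)
    (hfi : ∫⁻ x, f x ∂μ ≠ ∞) (hgi : ∫⁻ y, g y ∂ν ≠ ∞) :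
    (∀ t : ℝ, 0 < t → LorenzE ν g t ≤ LorenzE μ f t) ↔
      (∀ t : ℝ≥0∞, ∫⁻ y, (g y - t) ∂ν ≤ ∫⁻ x, (f x - t) ∂μ) := by
  constructor
  · intro hL t
    rcases eq_or_ne t 0 with rfl | ht
    · simpa only [tsub_zero] using lintegral_le_of_forall_lintegral_tsub_le hg
        fun t ht ↦ lintegral_tsub_le_of_lorenzE_le hf hg hgi hL ht
    · exact lintegral_tsub_le_of_lorenzE_le hf hg hgi hL ht
  · intro hI t _
    obtain ⟨s, hs⟩ := exists_lintegral_tsub_add_mul_le_lorenzE hf hfi t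
    calc LorenzE ν g t ≤ ∫⁻ y, g y - s ∂ν + s * ENNReal.ofReal t :=
          lorenzE_le_lintegral_tsub_add_mul hg s t
      _ ≤ ∫⁻ x, f x - s ∂μ + s * ENNReal.ofReal t := by gcongr; exact hI s
      _ ≤ LorenzE μ f t := hs

/-- `f` submajorizes `g` (Lorenz curves compare: `L_f(t) ≥ L_g(t)` for all `t > 0`)
if and only if `∫ (f − t)₊ dμ ≥ ∫ (g − t)₊ dν` for all `t ≥ 0`. -/
theorem stmt3 {X Y : Type*} [MeasurableSpace X] [MeasurableSpace Y]
    (μ : Measure X) (ν : Measure Y) [SigmaFinite μ] [SigmaFinite ν]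
    (f : X → ℝ≥0∞) (g : Y → ℝ≥0∞) (hf : Measurable f) (hg : Measurable g)
    (hfi : ∫⁻ x, f x ∂μ ≠ ∞) (hgi : ∫⁻ y, g y ∂ν ≠ ∞) :
    (∀ t : ℝ, 0 < t → LorenzE ν g t ≤ LorenzE μ f t) ↔
      (∀ t : ℝ≥0∞, ∫⁻ y, (g y - t) ∂ν ≤ ∫⁻ x, (f x - t) ∂μ) :=
  stmt3_general μ ν f g hf hg hfi hgi
end

section
/- Let (X,μ) and (Y,ν) be σ-finite measure spaces and f ∈ L¹(X,μ)⁺, g ∈ L¹(Y,ν)⁺. If ∫(f−t)₊ dμ ≥ ∫(g−t)₊ dν for all t ≥ 0, then for every convex function φ : ℝ≥0 → ℝ≥0 with φ(0) = 0 one has ∫_X φ∘f dμ ≥ ∫_Y φ∘g dν. -/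
/-!
The hypothesis says that `∫ ψ ∘ g dν ≤ ∫ ψ ∘ f dμ` for every nonnegative combination `ψ` of
hinge functions `s ↦ (s - t)₊` with `t ≥ 0`. For a mesh `h > 0`, the piecewise-linear
interpolant of `φ` at the nodes `k h` is such a combination: its slope increments are
differences of consecutive chord slopes, which are nonnegative by convexity, and its first slope
is nonnegative because `φ ≥ φ 0`. Delayed by one mesh, it lies below `φ` on `[0, ∞)` and above
`φ (· - h)`, so as `h → 0` it converges to `φ` pointwise (convex functions are continuous on the
interior). Fatou's lemma on the `g` side then gives the inequality for `φ`.
-/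

open MeasureTheory Set Filter Topology
open scoped ENNReal

namespace ConvexOn

variable {s : Set ℝ} {φ : ℝ → ℝ}

theorem le_add_slope_mul_sub (hφ : ConvexOn ℝ s φ) {a b x : ℝ} (ha : a ∈ s) (hb : b ∈ s)
    (hab : a < b) (hax : a ≤ x) (hxb : x ≤ b) : φ x ≤ φ b + slope φ a b * (x - b) := by
  rcases hxb.eq_or_lt with rfl | hxb
  · simp
  have hx : x ∈ s := hφ.1.ordConnected.out ha hb ⟨hax, hxb.le⟩
  have key : slope φ b a ≤ slope φ b x := hφ.slope_mono hb ⟨ha, hab.ne⟩ ⟨hx, hxb.ne⟩ hax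
  rw [slope_comm φ b a, slope_comm φ b x, slope_def_field φ x b,
    le_div_iff₀ (sub_pos.2 hxb)] at key
  linarith

theorem add_slope_mul_sub_le (hφ : ConvexOn ℝ s φ) {a b y : ℝ} (ha : a ∈ s) (hy : y ∈ s)
    (hab : a < b) (hby : b ≤ y) : φ b + slope φ a b * (y - b) ≤ φ y := by
  rcases hby.eq_or_lt with rfl | hby
  · simp
  have hb : b ∈ s := hφ.1.ordConnected.out ha hy ⟨hab.le, hby.le⟩
  have key : slope φ b a ≤ slope φ b y :=
    hφ.slope_mono hb ⟨ha, hab.ne⟩ ⟨hy, hby.ne'⟩ (hab.trans hby).le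
  rw [slope_comm φ b a, slope_def_field φ b y, le_div_iff₀ (sub_pos.2 hby)] at key
  linarith

theorem slope_nonneg_of_isMinOn (hφ : ConvexOn ℝ s φ) {x₀ a b : ℝ} (hmin : IsMinOn φ s x₀)
    (hx₀ : x₀ ∈ s) (hb : b ∈ s) (hx₀a : x₀ ≤ a) (hab : a < b) : 0 ≤ slope φ a b := by
  have hx₀b : x₀ < b := hx₀a.trans_lt hab
  have ha : a ∈ s := hφ.1.ordConnected.out hx₀ hb ⟨hx₀a, hab.le⟩
  have key : slope φ b x₀ ≤ slope φ b a :=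
    hφ.slope_mono hb ⟨hx₀, hx₀b.ne⟩ ⟨ha, hab.ne⟩ hx₀a
  rw [slope_comm φ b x₀, slope_comm φ b a, slope_def_field] at key
  exact le_trans (div_nonneg (sub_nonneg.2 (hmin hb)) (sub_pos.2 hx₀b).le) key

end ConvexOn

theorem MeasureTheory.Integrable.max_sub_const_zero {X : Type*} [MeasurableSpace X]
    {μ : Measure X} {f : X → ℝ} (hf : Integrable f μ) {t : ℝ} (ht : 0 ≤ t) :
    Integrable (fun x => max (f x - t) 0) μ :=
  hf.pos_part.mono (by fun_prop) <| ae_of_all _ fun x => by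
    rw [Real.norm_of_nonneg (le_max_right _ _), Real.norm_of_nonneg (le_max_right _ _)]
    exact max_le_max_right 0 (by linarith)

theorem lintegral_ofReal_sum_mul_max_sub {X ι : Type*} [MeasurableSpace X] {μ : Measure X}
    {f : X → ℝ} (hf : Integrable f μ) (s : Finset ι) {a t : ι → ℝ} (ha : ∀ i, 0 ≤ a i)
    (ht : ∀ i, 0 ≤ t i) :
    ∫⁻ x, ENNReal.ofReal (∑ i ∈ s, a i * max (f x - t i) 0) ∂μ
      = ENNReal.ofReal (∑ i ∈ s, a i * ∫ x, max (f x - t i) 0 ∂μ) := by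
  have hint : ∀ i ∈ s, Integrable (fun x => a i * max (f x - t i) 0) μ :=
    fun i _ => (hf.max_sub_const_zero (ht i)).const_mul _
  simp_rw [← integral_const_mul, ← integral_finsetSum s hint]
  exact (ofReal_integral_eq_lintegral_ofReal (integrable_finsetSum s hint) (ae_of_all _
    fun x => Finset.sum_nonneg fun i _ => mul_nonneg (ha i) (le_max_right _ _))).symm

theorem lintegral_ofReal_sum_mul_max_sub_le {X Y ι : Type*} [MeasurableSpace X]
    [MeasurableSpace Y] {μ : Measure X} {ν : Measure Y} {f : X → ℝ} {g : Y → ℝ}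
    (hf : Integrable f μ) (hg : Integrable g ν)
    (hmaj : ∀ t : ℝ, 0 ≤ t → ∫ y, max (g y - t) 0 ∂ν ≤ ∫ x, max (f x - t) 0 ∂μ)
    (s : Finset ι) {a t : ι → ℝ} (ha : ∀ i, 0 ≤ a i) (ht : ∀ i, 0 ≤ t i) :
    ∫⁻ y, ENNReal.ofReal (∑ i ∈ s, a i * max (g y - t i) 0) ∂ν
      ≤ ∫⁻ x, ENNReal.ofReal (∑ i ∈ s, a i * max (f x - t i) 0) ∂μ := by
  rw [lintegral_ofReal_sum_mul_max_sub hg s ha ht, lintegral_ofReal_sum_mul_max_sub hf s ha ht]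
  gcongr with i
  exacts [ha i, hmaj _ (ht i)]

theorem MeasureTheory.lintegral_le_of_tendsto {X : Type*} [MeasurableSpace X] {μ : Measure X}
    {F : ℕ → X → ℝ≥0∞} {G : X → ℝ≥0∞} {C : ℝ≥0∞} (hF : ∀ n, AEMeasurable (F n) μ)
    (hFG : ∀ x, Tendsto (fun n => F n x) atTop (𝓝 (G x))) (hC : ∀ n, ∫⁻ x, F n x ∂μ ≤ C) :
    ∫⁻ x, G x ∂μ ≤ C :=
  calc ∫⁻ x, G x ∂μ = ∫⁻ x, liminf (fun n => F n x) atTop ∂μ :=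
        lintegral_congr fun x => (hFG x).liminf_eq.symm
    _ ≤ liminf (fun n => ∫⁻ x, F n x ∂μ) atTop := lintegral_liminf_le' hF
    _ ≤ C := liminf_le_of_frequently_le' (Frequently.of_forall hC)

noncomputable def chordSlope (φ : ℝ → ℝ) (h : ℝ) : ℕ → ℝ
  | 0 => 0
  | k + 1 => slope φ (k * h) ((k + 1) * h)

/-- For `x ≤ N h` this is the piecewise-linear interpolant of `φ - φ 0` at the nodes `k h`;
beyond `N h` it continues with the last chord slope. -/
noncomputable def chordInterp (φ : ℝ → ℝ) (h : ℝ) (N : ℕ) (x : ℝ) : ℝ :=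
  ∑ k ∈ Finset.range N, (chordSlope φ h (k + 1) - chordSlope φ h k) * max (x - k * h) 0

section ChordInterp

variable {φ : ℝ → ℝ} {h : ℝ}

theorem continuous_chordInterp (φ : ℝ → ℝ) (h : ℝ) (N : ℕ) : Continuous (chordInterp φ h N) := by
  unfold chordInterp; fun_prop

theorem chordInterp_eq_zero_of_nonpos (hh : 0 ≤ h) (N : ℕ) {x : ℝ} (hx : x ≤ 0) :
    chordInterp φ h N x = 0 :=
  Finset.sum_eq_zero fun k _ => by
    rw [max_eq_right (by nlinarith [k.cast_nonneg (α := ℝ)]), mul_zero]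

theorem chordInterp_eq_of_le_mul (hh : 0 ≤ h) {m N : ℕ} (hmN : m ≤ N) {x : ℝ}
    (hx : x ≤ m * h) : chordInterp φ h N x = chordInterp φ h m x := by
  rw [chordInterp, chordInterp, ← Finset.sum_range_add_sum_Ico _ hmN, add_eq_left]
  refine Finset.sum_eq_zero fun k hk => ?_
  have hmk : (m : ℝ) ≤ k := by exact_mod_cast (Finset.mem_Ico.1 hk).1
  rw [max_eq_right (by nlinarith), mul_zero]

theorem chordInterp_eq_of_mul_le (hφ0 : φ 0 = 0) (hh : 0 < h) {N : ℕ} {x : ℝ}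
    (hx : N * h ≤ x + h) :
    chordInterp φ h N x = φ (N * h) + chordSlope φ h N * (x - N * h) := by
  induction N with
  | zero => simp [chordInterp, chordSlope, hφ0]
  | succ N ih =>
    push_cast at hx ⊢
    rw [chordInterp, Finset.sum_range_succ, ← chordInterp, ih (by linarith),
      max_eq_left (by linarith), chordSlope, slope_def_field]
    field_simp
    ring

theorem exists_chordInterp_eq (hφ0 : φ 0 = 0) (hh : 0 < h) (N : ℕ) {x : ℝ} (hx : 0 ≤ x) :
    ∃ j ≤ N, j * h ≤ x + h ∧ (j < N → x ≤ j * h) ∧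
      chordInterp φ h N x = φ (j * h) + chordSlope φ h j * (x - j * h) := by
  set m := ⌈x / h⌉₊
  have hxm : x ≤ m * h := (div_le_iff₀ hh).1 (Nat.le_ceil _)
  have hmx : m * h < x + h := by
    rw [← lt_div_iff₀ hh, add_div, div_self hh.ne']
    exact Nat.ceil_lt_add_one (div_nonneg hx hh.le)
  rcases le_or_gt m N with hmN | hNm
  · exact ⟨m, hmN, hmx.le, fun _ => hxm,
      (chordInterp_eq_of_le_mul hh.le hmN hxm).trans (chordInterp_eq_of_mul_le hφ0 hh hmx.le)⟩
  · have hNm' : (N : ℝ) + 1 ≤ m := by exact_mod_cast hNm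
    refine ⟨N, le_rfl, by nlinarith, fun hN => (lt_irrefl N hN).elim,
      chordInterp_eq_of_mul_le hφ0 hh ?_⟩
    nlinarith

theorem le_chordInterp (hφ : ConvexOn ℝ (Ici 0) φ) (hφ0 : φ 0 = 0) (hh : 0 < h) {N : ℕ}
    {x : ℝ} (hx : 0 ≤ x) (hxN : x ≤ N * h) : φ x ≤ chordInterp φ h N x := by
  obtain ⟨j, hjN, hjx, hxj, heq⟩ := exists_chordInterp_eq hφ0 hh N hx
  have hxj : x ≤ j * h := by
    rcases eq_or_ne j N with rfl | hjN'
    · exact hxN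
    · exact hxj (lt_of_le_of_ne hjN hjN')
  rw [heq]
  cases j with
  | zero => simp [chordSlope, le_antisymm (by simpa using hxj) hx, hφ0]
  | succ j =>
    push_cast at hjx hxj ⊢
    exact hφ.le_add_slope_mul_sub (mem_Ici.2 (by positivity)) (mem_Ici.2 (by positivity))
      (by nlinarith) (by linarith) hxj

end ChordInterp

/-- Mesh `1 / (n + 1)` with nodes up to `n + 1`; the delay by one mesh puts it below `φ`. -/
noncomputable def lowerApprox (φ : ℝ → ℝ) (n : ℕ) (s : ℝ) : ℝ :=
  chordInterp φ (1 / (n + 1)) ((n + 1) ^ 2) (s - 1 / (n + 1))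

theorem continuous_lowerApprox (φ : ℝ → ℝ) (n : ℕ) : Continuous (lowerApprox φ n) :=
  (continuous_chordInterp _ _ _).comp (continuous_sub_right _)

theorem lowerApprox_eq_zero (φ : ℝ → ℝ) (n : ℕ) {s : ℝ} (hs : s ≤ 1 / (n + 1)) :
    lowerApprox φ n s = 0 :=
  chordInterp_eq_zero_of_nonpos (by positivity) _ (sub_nonpos.2 hs)

section NonnegConvex

variable {φ : ℝ → ℝ} (hφ : ConvexOn ℝ (Ici 0) φ) (hφpos : ∀ s, 0 ≤ s → 0 ≤ φ s)
  (hφ0 : φ 0 = 0)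
include hφ hφpos hφ0

theorem chordSlope_nonneg {h : ℝ} (hh : 0 < h) (k : ℕ) : 0 ≤ chordSlope φ h k := by
  cases k with
  | zero => exact le_rfl
  | succ k =>
    have hmin : IsMinOn φ (Ici 0) 0 := fun s hs => by simpa [hφ0] using hφpos s hs
    exact hφ.slope_nonneg_of_isMinOn hmin (mem_Ici.2 le_rfl) (mem_Ici.2 (by positivity))
      (by positivity) (by nlinarith)

theorem chordSlope_le_succ {h : ℝ} (hh : 0 < h) (k : ℕ) :
    chordSlope φ h k ≤ chordSlope φ h (k + 1) := by
  cases k with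
  | zero => exact chordSlope_nonneg hφ hφpos hφ0 hh 1
  | succ k =>
    have h1 : (k : ℝ) * h < (k + 1) * h := by nlinarith
    have h2 : ((k : ℝ) + 1) * h < (k + 1 + 1) * h := by nlinarith
    have key := hφ.slope_mono (mem_Ici.2 (by positivity)) ⟨mem_Ici.2 (by positivity), h1.ne⟩
      ⟨mem_Ici.2 (by positivity), h2.ne'⟩ (h1.trans h2).le
    rw [slope_comm] at key
    simpa [chordSlope] using key

theorem chordInterp_le {h : ℝ} (hh : 0 < h) (N : ℕ) {x : ℝ} (hx : 0 ≤ x) :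
    chordInterp φ h N x ≤ φ (x + h) := by
  obtain ⟨j, -, hjx, -, heq⟩ := exists_chordInterp_eq hφ0 hh N hx
  rw [heq]
  cases j with
  | zero => simpa [chordSlope, hφ0] using hφpos _ (by linarith)
  | succ j =>
    have hc := chordSlope_nonneg hφ hφpos hφ0 hh (j + 1)
    push_cast at hjx hc ⊢
    calc φ ((j + 1) * h) + chordSlope φ h (j + 1) * (x - (j + 1) * h)
        ≤ φ ((j + 1) * h) + chordSlope φ h (j + 1) * (x + h - (j + 1) * h) := by gcongr; linarith
      _ ≤ φ (x + h) :=
        hφ.add_slope_mul_sub_le (mem_Ici.2 (by positivity)) (mem_Ici.2 (by linarith))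
          (by nlinarith) hjx

theorem lowerApprox_le (n : ℕ) {s : ℝ} (hs : 0 ≤ s) : lowerApprox φ n s ≤ φ s := by
  have hh : (0 : ℝ) < 1 / (n + 1) := by positivity
  rcases le_or_gt s (1 / (n + 1)) with hsh | hsh
  · exact (lowerApprox_eq_zero φ n hsh).trans_le (hφpos s hs)
  · exact (chordInterp_le hφ hφpos hφ0 hh _ (by linarith)).trans_eq (by rw [sub_add_cancel])

theorem ofReal_lowerApprox_le (n : ℕ) (s : ℝ) :
    ENNReal.ofReal (lowerApprox φ n s) ≤ ENNReal.ofReal (φ s) := by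
  rcases lt_or_ge s 0 with hs | hs
  · rw [lowerApprox_eq_zero φ n (hs.le.trans (by positivity)), ENNReal.ofReal_zero]
    exact bot_le
  · exact ENNReal.ofReal_le_ofReal (lowerApprox_le hφ hφpos hφ0 n hs)

theorem tendsto_lowerApprox {s : ℝ} (hs : 0 ≤ s) :
    Tendsto (fun n => lowerApprox φ n s) atTop (𝓝 (φ s)) := by
  rcases hs.eq_or_lt with rfl | hs
  · refine tendsto_const_nhds.congr fun n => ?_
    rw [lowerApprox_eq_zero φ n (by positivity), hφ0]
  have hmesh : Tendsto (fun n : ℕ => 1 / ((n : ℝ) + 1)) atTop (𝓝 0) :=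
    tendsto_one_div_add_atTop_nhds_zero_nat
  have hφs : ContinuousAt φ s := by
    have := hφ.continuousOn_interior
    rw [interior_Ici] at this
    exact this.continuousAt (Ioi_mem_nhds hs)
  have hshift : Tendsto (fun n : ℕ => φ (s - 1 / (n + 1))) atTop (𝓝 (φ s)) :=
    hφs.tendsto.comp (by simpa using tendsto_const_nhds.sub hmesh)
  refine tendsto_of_tendsto_of_tendsto_of_le_of_le' hshift tendsto_const_nhds ?_
    (Eventually.of_forall fun n => lowerApprox_le hφ hφpos hφ0 n hs.le)
  filter_upwards [hmesh.eventually (eventually_lt_nhds hs), eventually_ge_atTop ⌈s⌉₊]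
    with n hn hns
  have hsn : s ≤ n := (Nat.le_ceil s).trans (by exact_mod_cast hns)
  refine le_chordInterp hφ hφ0 (by positivity) (by linarith) ?_
  push_cast
  rw [sq, mul_assoc, mul_one_div_cancel (by positivity), mul_one]
  linarith [show (0 : ℝ) ≤ 1 / (n + 1) by positivity]

theorem lintegral_ofReal_lowerApprox_le {X Y : Type*} [MeasurableSpace X] [MeasurableSpace Y]
    {μ : Measure X} {ν : Measure Y} {f : X → ℝ} {g : Y → ℝ}
    (hf : Integrable f μ) (hg : Integrable g ν)
    (hmaj : ∀ t : ℝ, 0 ≤ t → ∫ y, max (g y - t) 0 ∂ν ≤ ∫ x, max (f x - t) 0 ∂μ) (n : ℕ) :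
    ∫⁻ y, ENNReal.ofReal (lowerApprox φ n (g y)) ∂ν
      ≤ ∫⁻ x, ENNReal.ofReal (lowerApprox φ n (f x)) ∂μ := by
  simp only [lowerApprox, chordInterp, sub_sub]
  exact lintegral_ofReal_sum_mul_max_sub_le hf hg hmaj _
    (fun k => sub_nonneg.2 (chordSlope_le_succ hφ hφpos hφ0 (by positivity) k))
    (fun k => by positivity)

end NonnegConvex

theorem stmt4_general {X Y : Type*} [MeasurableSpace X] [MeasurableSpace Y]
    (μ : Measure X) (ν : Measure Y)
    (f : X → ℝ) (g : Y → ℝ) (hf : Integrable f μ) (hg : Integrable g ν)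
    (hgpos : ∀ y, 0 ≤ g y)
    (hmaj : ∀ t : ℝ, 0 ≤ t →
      ∫ y, max (g y - t) 0 ∂ν ≤ ∫ x, max (f x - t) 0 ∂μ)
    (φ : ℝ → ℝ) (hφconv : ConvexOn ℝ (Set.Ici (0 : ℝ)) φ)
    (hφpos : ∀ s : ℝ, 0 ≤ s → 0 ≤ φ s) (hφ0 : φ 0 = 0) :
    ∫⁻ y, ENNReal.ofReal (φ (g y)) ∂ν ≤ ∫⁻ x, ENNReal.ofReal (φ (f x)) ∂μ := by
  refine lintegral_le_of_tendsto
    (fun n => ((continuous_lowerApprox φ n).measurable.comp_aemeasurable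
      hg.aemeasurable).ennreal_ofReal)
    (fun y => (ENNReal.continuous_ofReal.tendsto _).comp
      (tendsto_lowerApprox hφconv hφpos hφ0 (hgpos y)))
    fun n => ?_
  calc ∫⁻ y, ENNReal.ofReal (lowerApprox φ n (g y)) ∂ν
      ≤ ∫⁻ x, ENNReal.ofReal (lowerApprox φ n (f x)) ∂μ :=
        lintegral_ofReal_lowerApprox_le hφconv hφpos hφ0 hf hg hmaj n
    _ ≤ ∫⁻ x, ENNReal.ofReal (φ (f x)) ∂μ :=
        lintegral_mono fun x => ofReal_lowerApprox_le hφconv hφpos hφ0 n (f x)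

/-- If `∫ (f − t)₊ dμ ≥ ∫ (g − t)₊ dν` for all `t ≥ 0`, then for every convex
`φ : ℝ≥0 → ℝ≥0` with `φ 0 = 0` one has `∫ φ∘f dμ ≥ ∫ φ∘g dν`. -/
theorem stmt4 {X Y : Type*} [MeasurableSpace X] [MeasurableSpace Y]
    (μ : Measure X) (ν : Measure Y) [SigmaFinite μ] [SigmaFinite ν]
    (f : X → ℝ) (g : Y → ℝ) (hf : Integrable f μ) (hg : Integrable g ν)
    (hfpos : ∀ x, 0 ≤ f x) (hgpos : ∀ y, 0 ≤ g y)
    (hmaj : ∀ t : ℝ, 0 ≤ t →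
      ∫ y, max (g y - t) 0 ∂ν ≤ ∫ x, max (f x - t) 0 ∂μ)
    (φ : ℝ → ℝ) (hφconv : ConvexOn ℝ (Set.Ici (0 : ℝ)) φ)
    (hφpos : ∀ s : ℝ, 0 ≤ s → 0 ≤ φ s) (hφ0 : φ 0 = 0) :
    ∫⁻ y, ENNReal.ofReal (φ (g y)) ∂ν ≤ ∫⁻ x, ENNReal.ofReal (φ (f x)) ∂μ :=
  stmt4_general μ ν f g hf hg hgpos hmaj φ hφconv hφpos hφ0
end

section
/- Let T be a doubly substochastic operator from (X,μ) to (Y,ν) and let Ω ⊆ X be measurable. Then T is integral-preserving on all L¹ functions supported in Ω if and only if T is integral-preserving on a single f ∈ L¹(X,μ)⁺ with supp f = Ω, if and only if T*(1) equals 1 almost everywhere on Ω. In particular, T is integral-preserving if and only if T* is unital. -/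
/-!
Pairing with the constant `1` turns the duality into `∫ T h = ∫ h · T'(1)`. Since
`0 ≤ h` and `T'(1) ≤ 1`, the integral of `h` is preserved exactly when `T'(1) = 1` a.e. on the
support of `h`. By σ-finiteness there is a bounded integrable `h ≥ 0` whose support is exactly
`Ω`, which links the single-function condition to the one for all functions supported in `Ω`.
-/

open MeasureTheory Set
open scoped ENNReal

/-- A doubly substochastic operator from `(X,μ)` to `(Y,ν)`, bundled together with its
dual doubly substochastic operator: both are positive linear maps on `L∞`, subunital,
integral-non-increasing, and related by the duality `∫ (T h)·g dν = ∫ h·(T' g) dμ`. -/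
structure DSSPair {X Y : Type*} [MeasurableSpace X] [MeasurableSpace Y]
    (μ : Measure X) (ν : Measure Y) where
  T : Lp ℝ ⊤ μ →ₗ[ℝ] Lp ℝ ⊤ ν
  T' : Lp ℝ ⊤ ν →ₗ[ℝ] Lp ℝ ⊤ μ
  posT : ∀ h : Lp ℝ ⊤ μ, (∀ᵐ x ∂μ, 0 ≤ h x) → ∀ᵐ y ∂ν, 0 ≤ (T h) y
  posT' : ∀ g : Lp ℝ ⊤ ν, (∀ᵐ y ∂ν, 0 ≤ g y) → ∀ᵐ x ∂μ, 0 ≤ (T' g) x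
  subT : ∀ h : Lp ℝ ⊤ μ, (∀ᵐ x ∂μ, h x ≤ 1) → ∀ᵐ y ∂ν, (T h) y ≤ 1
  subT' : ∀ g : Lp ℝ ⊤ ν, (∀ᵐ y ∂ν, g y ≤ 1) → ∀ᵐ x ∂μ, (T' g) x ≤ 1
  subintT : ∀ h : Lp ℝ ⊤ μ, (∀ᵐ x ∂μ, 0 ≤ h x) →
    ∫⁻ y, ENNReal.ofReal ((T h) y) ∂ν ≤ ∫⁻ x, ENNReal.ofReal (h x) ∂μ
  subintT' : ∀ g : Lp ℝ ⊤ ν, (∀ᵐ y ∂ν, 0 ≤ g y) →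
    ∫⁻ x, ENNReal.ofReal ((T' g) x) ∂μ ≤ ∫⁻ y, ENNReal.ofReal (g y) ∂ν
  duality : ∀ (h : Lp ℝ ⊤ μ) (g : Lp ℝ ⊤ ν),
    (∀ᵐ x ∂μ, 0 ≤ h x) → (∀ᵐ y ∂ν, 0 ≤ g y) →
    ∫⁻ y, ENNReal.ofReal ((T h) y * g y) ∂ν
      = ∫⁻ x, ENNReal.ofReal (h x * (T' g) x) ∂μ

theorem exists_integrable_pos_le_one {X : Type*} [MeasurableSpace X] (μ : Measure X)
    [SigmaFinite μ] : ∃ w : X → ℝ, Measurable w ∧ Integrable w μ ∧ ∀ x, 0 < w x ∧ w x ≤ 1 := by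
  obtain ⟨g, g_pos, g_meas, g_lt⟩ := exists_pos_lintegral_lt_of_sigmaFinite μ one_ne_zero
  have g_int : Integrable (fun x => (g x : ℝ)) μ := by
    simpa using integrable_toReal_of_lintegral_ne_top g_meas.coe_nnreal_ennreal.aemeasurable
      (g_lt.trans ENNReal.one_lt_top).ne
  refine ⟨fun x => min (g x : ℝ) 1, g_meas.coe_nnreal_real.min measurable_const, ?_, fun x =>
    ⟨lt_min (g_pos x) one_pos, min_le_right _ _⟩⟩
  refine g_int.mono' (by fun_prop) (Filter.Eventually.of_forall fun x => ?_)
  exact (Real.norm_of_nonneg (le_min (g x).2 zero_le_one)).trans_le (min_le_left _ _)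

theorem exists_Lp_top_nonneg_integrable_ae_ne_zero_iff {X : Type*} [MeasurableSpace X]
    (μ : Measure X) [SigmaFinite μ] {Ω : Set X} (hΩ : MeasurableSet Ω) :
    ∃ h : Lp ℝ ⊤ μ, (∀ᵐ x ∂μ, 0 ≤ h x) ∧ Integrable h μ ∧ ∀ᵐ x ∂μ, h x ≠ 0 ↔ x ∈ Ω := by
  obtain ⟨w, w_meas, w_int, w_bound⟩ := exists_integrable_pos_le_one μ
  have f_bound : ∀ x, 0 ≤ Ω.indicator w x ∧ Ω.indicator w x ≤ 1 := fun x => by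
    by_cases hx : x ∈ Ω
    · simpa [hx] using ⟨(w_bound x).1.le, (w_bound x).2⟩
    · simp [hx]
  have f_memLp : MemLp (Ω.indicator w) ⊤ μ :=
    memLp_top_of_bound (w_meas.indicator hΩ).aestronglyMeasurable 1
      (Filter.Eventually.of_forall fun x => by
        rw [Real.norm_of_nonneg (f_bound x).1]; exact (f_bound x).2)
  have h_eq : ⇑(f_memLp.toLp _) =ᵐ[μ] Ω.indicator w := MemLp.coeFn_toLp _
  refine ⟨f_memLp.toLp _, h_eq.mono fun x hx => hx ▸ (f_bound x).1,
    (w_int.indicator hΩ).congr h_eq.symm, h_eq.mono fun x hx => ?_⟩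
  rw [hx, indicator_apply_ne_zero]
  simp [(w_bound x).1.ne']

theorem ae_ne_zero_imp_eq_one_of_lintegral_mul_eq {X : Type*} [MeasurableSpace X]
    {μ : Measure X} {h k : X → ℝ} (h_nonneg : ∀ᵐ x ∂μ, 0 ≤ h x) (h_int : Integrable h μ)
    (k_le : ∀ᵐ x ∂μ, k x ≤ 1)
    (h_eq : ∫⁻ x, ENNReal.ofReal (h x * k x) ∂μ = ∫⁻ x, ENNReal.ofReal (h x) ∂μ) :
    ∀ᵐ x ∂μ, h x ≠ 0 → k x = 1 := by
  have mul_le : (fun x => ENNReal.ofReal (h x * k x)) ≤ᵐ[μ] fun x => ENNReal.ofReal (h x) := by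
    filter_upwards [h_nonneg, k_le] with x hx kx
    exact ENNReal.ofReal_le_ofReal (mul_le_of_le_one_right hx kx)
  have h_fin : ∫⁻ x, ENNReal.ofReal (h x) ∂μ ≠ ∞ :=
    (lintegral_ofReal_ne_top_iff_integrable h_int.1 h_nonneg).mpr h_int
  have mul_ae_eq := ae_eq_of_ae_le_of_lintegral_le mul_le (h_eq ▸ h_fin)
    h_int.1.aemeasurable.ennreal_ofReal h_eq.ge
  filter_upwards [mul_ae_eq, h_nonneg, k_le] with x hx h_nonneg_x k_le_x h_ne
  have h_pos : 0 < h x := h_nonneg_x.lt_of_ne' h_ne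
  by_contra k_ne
  exact ((ENNReal.ofReal_lt_ofReal_iff h_pos).2
    (mul_lt_of_lt_one_right h_pos (k_le_x.lt_of_ne k_ne))).ne hx

namespace DSSPair

variable {X Y : Type*} [MeasurableSpace X] [MeasurableSpace Y] {μ : Measure X} {ν : Measure Y}
  (D : DSSPair μ ν)

def PreservesLIntegral (h : Lp ℝ ⊤ μ) : Prop :=
  ∫⁻ y, ENNReal.ofReal ((D.T h) y) ∂ν = ∫⁻ x, ENNReal.ofReal (h x) ∂μ

def PreservesLIntegralOn (Ω : Set X) : Prop :=
  ∀ h : Lp ℝ ⊤ μ, (∀ᵐ x ∂μ, 0 ≤ h x) → Integrable h μ → (∀ᵐ x ∂μ, x ∉ Ω → h x = 0) →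
    D.PreservesLIntegral h

def DualUnitalOn (Ω : Set X) : Prop :=
  ∀ g : Lp ℝ ⊤ ν, (⇑g =ᵐ[ν] fun _ => (1 : ℝ)) → ∀ᵐ x ∂μ, x ∈ Ω → (D.T' g) x = 1

theorem lintegral_T_eq_lintegral_mul_T' {h : Lp ℝ ⊤ μ} (h_nonneg : ∀ᵐ x ∂μ, 0 ≤ h x)
    {g : Lp ℝ ⊤ ν} (hg : ⇑g =ᵐ[ν] fun _ => (1 : ℝ)) :
    ∫⁻ y, ENNReal.ofReal ((D.T h) y) ∂ν = ∫⁻ x, ENNReal.ofReal (h x * (D.T' g) x) ∂μ := by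
  rw [← D.duality h g h_nonneg (hg.mono fun y hy => hy ▸ zero_le_one)]
  exact lintegral_congr_ae (hg.mono fun y hy => by simp only [hy, mul_one])

theorem preservesLIntegralOn_of_dualUnitalOn {Ω : Set X} (hD : D.DualUnitalOn Ω) :
    D.PreservesLIntegralOn Ω := by
  intro h h_nonneg _ h_supp
  obtain ⟨one, one_eq⟩ : ∃ one : Lp ℝ ⊤ ν, ⇑one =ᵐ[ν] fun _ => (1 : ℝ) :=
    ⟨_, (memLp_top_const 1).coeFn_toLp⟩
  rw [PreservesLIntegral, D.lintegral_T_eq_lintegral_mul_T' h_nonneg one_eq]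
  refine lintegral_congr_ae ?_
  filter_upwards [hD one one_eq, h_supp] with x hx_one hx_supp
  by_cases hxΩ : x ∈ Ω
  · rw [hx_one hxΩ, mul_one]
  · rw [hx_supp hxΩ, zero_mul]

theorem T'_eq_one_of_preservesLIntegral {h : Lp ℝ ⊤ μ} (h_nonneg : ∀ᵐ x ∂μ, 0 ≤ h x)
    (h_int : Integrable h μ) (h_eq : D.PreservesLIntegral h) {g : Lp ℝ ⊤ ν}
    (hg : ⇑g =ᵐ[ν] fun _ => (1 : ℝ)) : ∀ᵐ x ∂μ, h x ≠ 0 → (D.T' g) x = 1 :=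
  ae_ne_zero_imp_eq_one_of_lintegral_mul_eq h_nonneg h_int
    (D.subT' g (hg.mono fun _ hy => hy.le))
    ((D.lintegral_T_eq_lintegral_mul_T' h_nonneg hg).symm.trans h_eq)

theorem tfae_preservesLIntegralOn [SigmaFinite μ] {Ω : Set X} (hΩ : MeasurableSet Ω) :
    List.TFAE [D.PreservesLIntegralOn Ω,
      ∃ h : Lp ℝ ⊤ μ, (∀ᵐ x ∂μ, 0 ≤ h x) ∧ Integrable h μ ∧ (∀ᵐ x ∂μ, h x ≠ 0 ↔ x ∈ Ω) ∧
        D.PreservesLIntegral h,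
      D.DualUnitalOn Ω] := by
  tfae_have 1 → 2 := fun hD => by
    obtain ⟨h, h_nonneg, h_int, h_supp⟩ := exists_Lp_top_nonneg_integrable_ae_ne_zero_iff μ hΩ
    exact ⟨h, h_nonneg, h_int, h_supp, hD h h_nonneg h_int
      (h_supp.mono fun x hx hxΩ => not_not.1 (mt hx.1 hxΩ))⟩
  tfae_have 2 → 3 := fun ⟨h, h_nonneg, h_int, h_supp, h_eq⟩ g hg => by
    filter_upwards [D.T'_eq_one_of_preservesLIntegral h_nonneg h_int h_eq hg, h_supp]
      with x hx hx_supp hxΩ using hx (hx_supp.2 hxΩ)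
  tfae_have 3 → 1 := D.preservesLIntegralOn_of_dualUnitalOn
  tfae_finish

end DSSPair

theorem stmt6_general {X Y : Type*} [MeasurableSpace X] [MeasurableSpace Y]
    (μ : Measure X) (ν : Measure Y) [SigmaFinite μ]
    (D : DSSPair μ ν) (Ω : Set X) (hΩ : MeasurableSet Ω) :
    ((∀ h : Lp ℝ ⊤ μ, (∀ᵐ x ∂μ, 0 ≤ h x) → Integrable h μ →
        (∀ᵐ x ∂μ, x ∉ Ω → h x = 0) →
        ∫⁻ y, ENNReal.ofReal ((D.T h) y) ∂ν = ∫⁻ x, ENNReal.ofReal (h x) ∂μ) ↔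
      (∃ h : Lp ℝ ⊤ μ, (∀ᵐ x ∂μ, 0 ≤ h x) ∧ Integrable h μ ∧
        (∀ᵐ x ∂μ, h x ≠ 0 ↔ x ∈ Ω) ∧
        ∫⁻ y, ENNReal.ofReal ((D.T h) y) ∂ν = ∫⁻ x, ENNReal.ofReal (h x) ∂μ)) ∧
    ((∀ h : Lp ℝ ⊤ μ, (∀ᵐ x ∂μ, 0 ≤ h x) → Integrable h μ →
        (∀ᵐ x ∂μ, x ∉ Ω → h x = 0) →
        ∫⁻ y, ENNReal.ofReal ((D.T h) y) ∂ν = ∫⁻ x, ENNReal.ofReal (h x) ∂μ) ↔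
      (∀ g : Lp ℝ ⊤ ν, (⇑g =ᵐ[ν] fun _ => (1 : ℝ)) →
        ∀ᵐ x ∂μ, x ∈ Ω → (D.T' g) x = 1)) :=
  have tfae := D.tfae_preservesLIntegralOn hΩ
  ⟨tfae.out 0 1, tfae.out 0 2⟩

/-- For a doubly substochastic operator `T` and a measurable `Ω ⊆ X`, the following are
equivalent: (a) `T` is integral-preserving on all integrable functions supported in `Ω`;
(b) `T` is integral-preserving on a single nonnegative integrable function with support
`Ω`; (c) `T'(1) = 1` almost everywhere on `Ω`.  (The special case `Ω = X` says that `T`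
is integral-preserving iff its dual is unital.) -/
theorem stmt6 {X Y : Type*} [MeasurableSpace X] [MeasurableSpace Y]
    (μ : Measure X) (ν : Measure Y) [SigmaFinite μ] [SigmaFinite ν]
    (D : DSSPair μ ν) (Ω : Set X) (hΩ : MeasurableSet Ω) :
    ((∀ h : Lp ℝ ⊤ μ, (∀ᵐ x ∂μ, 0 ≤ h x) → Integrable h μ →
        (∀ᵐ x ∂μ, x ∉ Ω → h x = 0) →
        ∫⁻ y, ENNReal.ofReal ((D.T h) y) ∂ν = ∫⁻ x, ENNReal.ofReal (h x) ∂μ) ↔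
      (∃ h : Lp ℝ ⊤ μ, (∀ᵐ x ∂μ, 0 ≤ h x) ∧ Integrable h μ ∧
        (∀ᵐ x ∂μ, h x ≠ 0 ↔ x ∈ Ω) ∧
        ∫⁻ y, ENNReal.ofReal ((D.T h) y) ∂ν = ∫⁻ x, ENNReal.ofReal (h x) ∂μ)) ∧
    ((∀ h : Lp ℝ ⊤ μ, (∀ᵐ x ∂μ, 0 ≤ h x) → Integrable h μ →
        (∀ᵐ x ∂μ, x ∉ Ω → h x = 0) →
        ∫⁻ y, ENNReal.ofReal ((D.T h) y) ∂ν = ∫⁻ x, ENNReal.ofReal (h x) ∂μ) ↔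
      (∀ g : Lp ℝ ⊤ ν, (⇑g =ᵐ[ν] fun _ => (1 : ℝ)) →
        ∀ᵐ x ∂μ, x ∈ Ω → (D.T' g) x = 1)) :=
  stmt6_general μ ν D Ω hΩ
end

section
/- There exist measure spaces and functions f ≻ g for which no doubly stochastic operator maps f to g: take X = Y = ℕ with counting measure, g = (2⁻¹, 2⁻², 2⁻³, …) and f = (0, 2⁻¹, 2⁻², …). Then f and g mutually majorize each other (f↓ = g↓ = g), yet there is no doubly stochastic infinite matrix T (nonnegative entries, all row and column sums equal to 1) with T(f) = g. -/
open scoped BigOperators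

/-- The counterexample of the paper: on `ℕ` with counting measure, with
`g = (2⁻¹, 2⁻², …)` and `f = (0, 2⁻¹, 2⁻², …)`, the sequences `f` and `g` mutually
majorize each other (the sum of the `k` largest entries of `f` equals
`∑_{m<k} g m` for every `k`, i.e. `f↓ = g↓ = g`), yet there is no doubly stochastic
infinite matrix `T` (nonnegative entries, all row and column sums equal to `1`)
with `T f = g`. -/
theorem stmt8 (g f : ℕ → ℝ)
    (hg : ∀ n, g n = (2 : ℝ)⁻¹ ^ (n + 1))
    (hf : ∀ n, f n = if n = 0 then 0 else g (n - 1)) :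
    (∀ k : ℕ, sSup {c : ℝ | ∃ s : Finset ℕ, s.card = k ∧ c = ∑ m ∈ s, f m}
        = ∑ m ∈ Finset.range k, g m) ∧
    ¬ ∃ T : ℕ → ℕ → ℝ, (∀ n m, 0 ≤ T n m) ∧ (∀ n, ∑' m, T n m = 1) ∧
        (∀ m, ∑' n, T n m = 1) ∧ (∀ n, ∑' m, T n m * f m = g n) := by
  have hf0 : f 0 = 0 := by rw [hf]; simp
  have hfm : ∀ m, 1 ≤ m → f m = (2 : ℝ)⁻¹ ^ m := by
    intro m hm
    rw [hf m, if_neg (by omega), hg]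
    congr 1; omega
  have hfnonneg : ∀ m, 0 ≤ f m := by
    intro m
    rcases Nat.eq_zero_or_pos m with h | h
    · rw [h, hf0]
    · rw [hfm m h]; positivity
  have hgnonneg : ∀ n, 0 ≤ g n := fun n => by rw [hg]; positivity
  have hgpos : ∀ n, 0 < g n := fun n => by rw [hg]; positivity
  have hfle1 : ∀ m, f m ≤ 1 := by
    intro m
    rcases Nat.eq_zero_or_pos m with h | h
    · rw [h, hf0]; norm_num
    · rw [hfm m h]
      exact pow_le_one₀ (by norm_num) (by norm_num)
  constructor
  · -- Part 1 : the supremum computation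
    intro k
    set S : Set ℝ := {c : ℝ | ∃ s : Finset ℕ, s.card = k ∧ c = ∑ m ∈ s, f m} with hS
    have hmem : (∑ m ∈ Finset.range k, g m) ∈ S := by
      refine ⟨Finset.image (· + 1) (Finset.range k), ?_, ?_⟩
      · rw [Finset.card_image_of_injective _ (fun a b h => by omega)]
        exact Finset.card_range k
      · rw [Finset.sum_image (fun x _ y _ h => by omega)]
        refine Finset.sum_congr rfl (fun m _ => ?_)
        rw [hf, if_neg (by omega)]
        simp
    have hub : ∀ c ∈ S, c ≤ ∑ m ∈ Finset.range k, g m := by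
      rintro c ⟨s, hsk, rfl⟩
      rw [← Finset.sum_erase s hf0]
      set t : Finset ℕ := s.erase 0 with ht
      have h0t : 0 ∉ t := Finset.notMem_erase 0 s
      have hk' : t.card ≤ k := hsk ▸ Finset.card_erase_le
      set e := t.orderEmbOfFin rfl with he
      have key : ∀ j : ℕ, ∀ h : j < t.card, j + 1 ≤ e ⟨j, h⟩ := by
        intro j
        induction j with
        | zero =>
          intro h
          have hmem0 : e ⟨0, h⟩ ∈ t := t.orderEmbOfFin_mem rfl ⟨0, h⟩
          have : e ⟨0, h⟩ ≠ 0 := fun hc => h0t (hc ▸ hmem0)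
          omega
        | succ j ih =>
          intro h
          have h' : j < t.card := by omega
          have hlt : e ⟨j, h'⟩ < e ⟨j + 1, h⟩ :=
            (t.orderEmbOfFin rfl).strictMono (by exact Fin.mk_lt_mk.mpr (Nat.lt_succ_self j))
          have := ih h'
          omega
      have ht_eq : t = Finset.image (fun i => e i) Finset.univ := by
        apply Finset.coe_injective
        rw [Finset.coe_image, Finset.coe_univ, Set.image_univ]
        exact (t.range_orderEmbOfFin rfl).symm
      rw [ht_eq, Finset.sum_image (fun x _ y _ h => e.injective h)]
      have step1 : ∑ i : Fin t.card, f (e i) ≤ ∑ i : Fin t.card, g i := by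
        refine Finset.sum_le_sum (fun i _ => ?_)
        have h1 : (i : ℕ) + 1 ≤ e i := key i.1 i.2
        rw [hfm (e i) (by omega), hg]
        exact pow_le_pow_of_le_one (by norm_num) (by norm_num) h1
      have step2 : ∑ i : Fin t.card, g i = ∑ i ∈ Finset.range t.card, g i :=
        Fin.sum_univ_eq_sum_range g t.card
      have step3 : ∑ i ∈ Finset.range t.card, g i ≤ ∑ i ∈ Finset.range k, g i :=
        Finset.sum_le_sum_of_subset_of_nonneg (Finset.range_subset_range.mpr hk')
          (fun i _ _ => hgnonneg i)
      calc ∑ i : Fin t.card, f (e i) ≤ ∑ i : Fin t.card, g i := step1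
        _ = ∑ i ∈ Finset.range t.card, g i := step2
        _ ≤ ∑ i ∈ Finset.range k, g i := step3
    exact le_antisymm (csSup_le ⟨_, hmem⟩ hub) (le_csSup ⟨_, hub⟩ hmem)
  · -- Part 2 : no doubly stochastic matrix maps f to g
    rintro ⟨T, hT0, hrow, hcol, hTf⟩
    have hrow_s : ∀ n, Summable (T n) := by
      intro n
      by_contra h
      exact one_ne_zero ((hrow n).symm.trans (tsum_eq_zero_of_not_summable h))
    have hcol_s : ∀ m, Summable (fun n => T n m) := by
      intro m
      by_contra h
      exact one_ne_zero ((hcol m).symm.trans (tsum_eq_zero_of_not_summable h))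
    have hTf_s : ∀ n, Summable (fun m => T n m * f m) := by
      intro n
      refine Summable.of_nonneg_of_le
        (fun m => mul_nonneg (hT0 n m) (hfnonneg m))
        (fun m => mul_le_of_le_one_right (hT0 n m) (hfle1 m)) (hrow_s n)
    have main : ∀ n m, m ≠ n + 1 → T n m = 0 := by
      intro n
      induction n using Nat.strong_induction_on with
      | _ n IH =>
        have stepA : ∀ k, k < n → T k (k + 1) = 1 := by
          intro k hk
          have h1 := hrow k
          rwa [tsum_eq_single (k + 1) (fun m hm => IH k hk m hm)] at h1
        have stepB : ∀ m, 1 ≤ m → m ≤ n → T n m = 0 := by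
          intro m h1 h2
          have hm1 : m - 1 < n := by omega
          have hT1 : T (m - 1) ((m - 1) + 1) = 1 := stepA _ hm1
          rw [show (m - 1) + 1 = m by omega] at hT1
          have hsum : ∑ i ∈ ({m - 1, n} : Finset ℕ), T i m ≤ ∑' i, T i m :=
            Summable.sum_le_tsum _ (fun i _ => hT0 i m) (hcol_s m)
          rw [hcol m, Finset.sum_pair (by omega : m - 1 ≠ n), hT1] at hsum
          have := hT0 n m
          linarith
        set h : ℕ → ℝ := fun m => T n m * (g n - f m) with hh
        have hle : ∀ m, m ≠ 0 → n + 1 ≤ m → f m ≤ g n := by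
          intro m hm0 hmn
          rw [hfm m (by omega), hg]
          exact pow_le_pow_of_le_one (by norm_num) (by norm_num) hmn
        have hnonneg : ∀ m, 0 ≤ h m := by
          intro m
          by_cases hc : 1 ≤ m ∧ m ≤ n
          · simp [hh, stepB m hc.1 hc.2]
          · have hfg : f m ≤ g n := by
              rcases Nat.eq_zero_or_pos m with h0 | h0
              · rw [h0, hf0]; exact (hgpos n).le
              · exact hle m (by omega) (by omega)
            exact mul_nonneg (hT0 n m) (by linarith)
        have hsub_s : Summable (fun m => T n m * g n) := (hrow_s n).mul_right (g n)
        have hsummable : Summable h := by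
          have : h = fun m => T n m * g n - T n m * f m := by
            funext m; rw [hh]; ring
          rw [this]
          exact hsub_s.sub (hTf_s n)
        have htsum : ∑' m, h m = 0 := by
          have heq : ∀ m, h m = T n m * g n - T n m * f m := fun m => by rw [hh]; ring
          calc ∑' m, h m = ∑' m, (T n m * g n - T n m * f m) := by
                exact tsum_congr heq
            _ = (∑' m, T n m * g n) - ∑' m, T n m * f m := Summable.tsum_sub hsub_s (hTf_s n)
            _ = (∑' m, T n m) * g n - g n := by rw [tsum_mul_right, hTf n]
            _ = 0 := by rw [hrow n]; ring
        have hzero : ∀ m, h m = 0 := by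
          intro m
          have hlm : h m ≤ ∑' j, h j := Summable.le_tsum hsummable m (fun j _ => hnonneg j)
          rw [htsum] at hlm
          exact le_antisymm hlm (hnonneg m)
        intro m hm
        by_cases hc : 1 ≤ m ∧ m ≤ n
        · exact stepB m hc.1 hc.2
        · have hlt : f m < g n := by
            rcases Nat.eq_zero_or_pos m with h0 | h0
            · rw [h0, hf0]; exact hgpos n
            · have hm2 : n + 2 ≤ m := by omega
              have h1 : f m ≤ (2 : ℝ)⁻¹ ^ (n + 2) := by
                rw [hfm m (by omega)]
                exact pow_le_pow_of_le_one (by norm_num) (by norm_num) hm2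
              have h2 : (2 : ℝ)⁻¹ ^ (n + 2) < (2 : ℝ)⁻¹ ^ (n + 1) := by
                rw [pow_succ]
                have hp : (0 : ℝ) < (2 : ℝ)⁻¹ ^ (n + 1) := by positivity
                nlinarith
              rw [hg]
              linarith
          have := hzero m
          rcases mul_eq_zero.mp this with h' | h'
          · exact h'
          · exfalso; rw [sub_eq_zero] at h'; linarith [h'.symm]
    have hzero0 : ∀ i, T i 0 = 0 := fun i => main i 0 (by omega)
    have : (1 : ℝ) = 0 := by
      rw [← hcol 0]
      simp [hzero0]
    exact one_ne_zero this
end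

section
/- Between two σ-finite measure spaces (respectively, semifinite von Neumann algebras with normal semifinite faithful traces), a doubly stochastic map exists if and only if the total measures (respectively, the traces of the identities) agree: DS(M → N) ≠ ∅ iff Tr_M(1) = Tr_N(1). -/
open MeasureTheory Set
open scoped ENNReal

/-!
If `T` is doubly stochastic, applying it to `1` and integrating gives `μ X = ∫ T 1 = ν Y`.

Conversely, cut `X` and `Y` into pieces `P n`, `Q m` of finite measure and lay intervals of
lengths `μ (P n)` and `ν (Q m)` end to end along `[0, ∞)`. Both families tile the same interval
`[0, μ X) = [0, ν Y)`, so the lengths `p n m` of the overlaps form a coupling with row sums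
`μ (P n)` and column sums `ν (Q m)`. The operator
`T h = ∑ n m, p n m / (μ (P n) * ν (Q m)) * (∫ x in P n, h x) * 1_{Q m}` is positive and unital,
and the transposed kernel gives an operator `T'` with `∫ (T h) g = ∫ h (T' g)`; taking `g = 1`
shows that `T` preserves integrals.
-/

theorem MeasureTheory.MemLp.ae_norm_le_toReal_eLpNorm_top {X E : Type*} [MeasurableSpace X]
    [NormedAddCommGroup E] {μ : Measure X} {h : X → E} (hh : MemLp h ⊤ μ) :
    ∀ᵐ x ∂μ, ‖h x‖ ≤ (eLpNorm h ⊤ μ).toReal := by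
  have hfin : eLpNormEssSup h μ ≠ ∞ := by
    simpa only [eLpNorm_exponent_top] using hh.eLpNorm_lt_top.ne
  filter_upwards [ae_le_eLpNormEssSup (f := h) (μ := μ)] with x hx
  simpa only [eLpNorm_exponent_top, toReal_enorm] using ENNReal.toReal_mono hfin hx

namespace DoublyStochastic

section Coupling

variable {a b : ℕ → ℝ≥0∞}

noncomputable def partialSum (a : ℕ → ℝ≥0∞) (n : ℕ) : ℝ :=
  ∑ i ∈ Finset.range n, (a i).toReal

lemma monotone_partialSum (a : ℕ → ℝ≥0∞) : Monotone (partialSum a) :=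
  monotone_nat_of_le_succ fun n => by
    simp only [partialSum, Finset.sum_range_succ, le_add_iff_nonneg_right, ENNReal.toReal_nonneg]

lemma ofReal_partialSum (ha : ∀ n, a n ≠ ∞) (n : ℕ) :
    ENNReal.ofReal (partialSum a n) = ∑ i ∈ Finset.range n, a i := by
  rw [partialSum, ENNReal.ofReal_sum_of_nonneg fun _ _ => ENNReal.toReal_nonneg]
  exact Finset.sum_congr rfl fun i _ => ENNReal.ofReal_toReal (ha i)

noncomputable def block (a : ℕ → ℝ≥0∞) (n : ℕ) : Set ℝ :=
  Ico (partialSum a n) (partialSum a (n + 1))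

lemma volume_block {n : ℕ} (ha : a n ≠ ∞) : volume (block a n) = a n := by
  rw [block, Real.volume_Ico, partialSum, partialSum, Finset.sum_range_succ, add_sub_cancel_left,
    ENNReal.ofReal_toReal ha]

lemma measurableSet_block (a : ℕ → ℝ≥0∞) (n : ℕ) : MeasurableSet (block a n) :=
  measurableSet_Ico

lemma pairwise_disjoint_block (a : ℕ → ℝ≥0∞) : Pairwise (Function.onFun Disjoint (block a)) :=
  (monotone_partialSum a).pairwise_disjoint_on_Ico_succ

lemma mem_iUnion_block_of_lt_partialSum {x : ℝ} (hx : 0 ≤ x) :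
    ∀ {N : ℕ}, x < partialSum a N → x ∈ ⋃ n, block a n
  | 0, hN => absurd hx (by simpa [partialSum] using hN)
  | N + 1, hN => by
    rcases lt_or_ge x (partialSum a N) with h | h
    · exact mem_iUnion_block_of_lt_partialSum hx h
    · exact mem_iUnion.2 ⟨N, h, hN⟩

lemma iUnion_block (ha : ∀ n, a n ≠ ∞) :
    ⋃ n, block a n = {x | 0 ≤ x ∧ ENNReal.ofReal x < ∑' n, a n} := by
  ext x
  constructor
  · simp only [mem_iUnion, block, mem_Ico, mem_ofPred_eq]
    rintro ⟨n, hn, hx⟩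
    have hx0 : 0 ≤ x := (monotone_partialSum a (Nat.zero_le n)).trans hn
    refine ⟨hx0, ?_⟩
    calc ENNReal.ofReal x < ENNReal.ofReal (partialSum a (n + 1)) :=
          ENNReal.ofReal_lt_ofReal_iff'.2 ⟨hx, hx0.trans_lt hx⟩
      _ = ∑ i ∈ Finset.range (n + 1), a i := ofReal_partialSum ha _
      _ ≤ ∑' i, a i := ENNReal.sum_le_tsum _
  · rintro ⟨hx, hlt⟩
    rw [ENNReal.tsum_eq_iSup_nat, lt_iSup_iff] at hlt
    obtain ⟨N, hN⟩ := hlt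
    rw [← ofReal_partialSum ha, ENNReal.ofReal_lt_ofReal_iff'] at hN
    exact mem_iUnion_block_of_lt_partialSum hx hN.1

lemma tsum_volume_block_inter (ha : ∀ n, a n ≠ ∞) (hb : ∀ m, b m ≠ ∞)
    (hab : ∑' n, a n = ∑' m, b m) (n : ℕ) :
    ∑' m, volume (block a n ∩ block b m) = a n := by
  have hsub : block a n ⊆ ⋃ m, block b m := by
    rw [iUnion_block hb, ← hab, ← iUnion_block ha]
    exact subset_iUnion (block a) n
  rw [← measure_iUnion (fun i j hij => ((pairwise_disjoint_block b hij).mono inter_subset_right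
      inter_subset_right)) (fun m => (measurableSet_block a n).inter (measurableSet_block b m)),
    ← inter_iUnion, inter_eq_self_of_subset_left hsub, volume_block (ha n)]

theorem exists_coupling (ha : ∀ n, a n ≠ ∞) (hb : ∀ m, b m ≠ ∞)
    (hab : ∑' n, a n = ∑' m, b m) :
    ∃ p : ℕ → ℕ → ℝ≥0∞, (∀ n, ∑' m, p n m = a n) ∧ ∀ m, ∑' n, p n m = b m :=
  ⟨fun n m => volume (block a n ∩ block b m), tsum_volume_block_inter ha hb hab,
    fun m => by simpa only [inter_comm] using tsum_volume_block_inter hb ha hab.symm m⟩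

end Coupling

/-- Columns over null pieces (`b m = 0`) are required to vanish so that the associated block
operator is bounded everywhere, not only almost everywhere. -/
structure IsStochasticKernel (a b : ℕ → ℝ) (k : ℕ → ℕ → ℝ) : Prop where
  nonneg : ∀ n m, 0 ≤ k n m
  eq_zero : ∀ n m, b m = 0 → k n m = 0
  hasSum : ∀ m, b m ≠ 0 → HasSum (fun n => k n m * a n) 1

namespace IsStochasticKernel

variable {a b : ℕ → ℝ} {k : ℕ → ℕ → ℝ}

lemma summable (hk : IsStochasticKernel a b k) (m : ℕ) : Summable fun n => k n m * a n := by
  by_cases hm : b m = 0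
  · simp only [hk.eq_zero _ m hm, zero_mul, summable_zero]
  · exact (hk.hasSum m hm).summable

lemma of_coupling {p : ℕ → ℕ → ℝ≥0∞} {A B : ℕ → ℝ≥0∞} (hA : ∀ n, A n ≠ ∞)
    (hrow : ∀ n, ∑' m, p n m = A n) (hcol : ∀ m, ∑' n, p n m = B m) :
    IsStochasticKernel (fun n => (A n).toReal) (fun m => (B m).toReal)
      (fun n m => (p n m).toReal / ((A n).toReal * (B m).toReal)) where
  nonneg n m := by positivity
  eq_zero n m hm := by simp only [hm, mul_zero, div_zero]
  hasSum m hm := by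
    have hterm : ∀ n, (p n m).toReal / ((A n).toReal * (B m).toReal) * (A n).toReal
        = (p n m).toReal / (B m).toReal := by
      intro n
      rcases eq_or_ne (A n).toReal 0 with hAn | hAn
      · have hp : p n m = 0 := by
          rw [ENNReal.toReal_eq_zero_iff, or_iff_left (hA n)] at hAn
          exact le_antisymm (hAn ▸ hrow n ▸ ENNReal.le_tsum m) zero_le
        simp only [hp, hAn, ENNReal.toReal_zero, zero_div, mul_zero]
      · field_simp
    have hBm : B m ≠ ∞ := fun h => hm (by simp [h])
    have hsum := ENNReal.hasSum_toReal (f := fun n => p n m) (hcol m ▸ hBm)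
    rw [← ENNReal.tsum_toReal_eq fun n => ?_, hcol m] at hsum
    · simpa only [hterm, div_self hm] using hsum.div_const (B m).toReal
    · exact ne_top_of_le_ne_top hBm (hcol m ▸ ENNReal.le_tsum n)

end IsStochasticKernel

theorem exists_isStochasticKernel_of_tsum_eq {a b : ℕ → ℝ≥0∞} (ha : ∀ n, a n ≠ ∞)
    (hb : ∀ m, b m ≠ ∞) (hab : ∑' n, a n = ∑' m, b m) :
    ∃ k : ℕ → ℕ → ℝ, IsStochasticKernel (fun n => (a n).toReal) (fun m => (b m).toReal) k ∧
      IsStochasticKernel (fun m => (b m).toReal) (fun n => (a n).toReal) fun m n => k n m := by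
  obtain ⟨p, hrow, hcol⟩ := exists_coupling ha hb hab
  refine ⟨_, .of_coupling ha hrow hcol, ?_⟩
  simpa only [mul_comm] using IsStochasticKernel.of_coupling (p := fun m n => p n m) hb hcol hrow

section Pieces

variable {X : Type*} [MeasurableSpace X] (μ : Measure X) [SigmaFinite μ]

noncomputable def piece (n : ℕ) : Set X := disjointed (spanningSets μ) n

noncomputable def weight (n : ℕ) : ℝ := μ.real (piece μ n)

lemma measurableSet_piece (n : ℕ) : MeasurableSet (piece μ n) :=
  .disjointed (measurableSet_spanningSets μ) n

lemma measure_piece_ne_top (n : ℕ) : μ (piece μ n) ≠ ∞ :=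
  ne_top_of_le_ne_top (measure_spanningSets_lt_top μ n).ne (measure_mono (disjointed_subset _ n))

lemma pairwise_disjoint_piece : Pairwise (Function.onFun Disjoint (piece μ)) :=
  disjoint_disjointed _

lemma iUnion_piece : ⋃ n, piece μ n = univ := by
  simp only [piece, iUnion_disjointed, iUnion_spanningSets]

lemma tsum_measure_piece : ∑' n, μ (piece μ n) = μ univ := by
  rw [← measure_iUnion (pairwise_disjoint_piece μ) (measurableSet_piece μ), iUnion_piece]

lemma lintegral_eq_tsum_piece (f : X → ℝ≥0∞) :
    ∫⁻ x, f x ∂μ = ∑' n, ∫⁻ x in piece μ n, f x ∂μ := by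
  rw [← lintegral_iUnion (measurableSet_piece μ) (pairwise_disjoint_piece μ), iUnion_piece,
    Measure.restrict_univ]

lemma spanningSetsIndex_eq_of_mem {x : X} {n : ℕ} (hx : x ∈ piece μ n) :
    spanningSetsIndex μ x = n :=
  (spanningSetsIndex_eq_iff μ).2 hx

lemma mem_piece_spanningSetsIndex (x : X) : x ∈ piece μ (spanningSetsIndex μ x) :=
  mem_disjointed_spanningSetsIndex μ x

lemma ae_weight_spanningSetsIndex_ne_zero : ∀ᵐ x ∂μ, weight μ (spanningSetsIndex μ x) ≠ 0 := by
  rw [ae_iff]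
  refine measure_mono_null (t := ⋃ n ∈ {n | μ (piece μ n) = 0}, piece μ n) ?_
    ((measure_biUnion_null_iff (to_countable _)).2 fun n hn => hn)
  intro x hx
  simp only [mem_ofPred_eq, not_not, weight, measureReal_eq_zero_iff (measure_piece_ne_top μ _)]
    at hx
  exact mem_biUnion hx (mem_piece_spanningSetsIndex μ x)

variable {μ} in
lemma integrableOn_piece {E : Type*} [NormedAddCommGroup E] {h : X → E} (hh : MemLp h ⊤ μ)
    (n : ℕ) : IntegrableOn h (piece μ n) μ :=
  have : IsFiniteMeasure (μ.restrict (piece μ n)) :=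
    ⟨by simpa using (measure_piece_ne_top μ n).lt_top⟩
  (hh.restrict _).integrable le_top

end Pieces

section BlockOperator

variable {X Y : Type*} [MeasurableSpace X] [MeasurableSpace Y] (μ : Measure X) (ν : Measure Y)
  [SigmaFinite μ] [SigmaFinite ν] {k : ℕ → ℕ → ℝ} {h h' : X → ℝ}

noncomputable def blockOp (k : ℕ → ℕ → ℝ) (h : X → ℝ) (y : Y) : ℝ :=
  ∑' n, k n (spanningSetsIndex ν y) * ∫ x in piece μ n, h x ∂μ

variable {μ ν}

lemma blockOp_of_mem {y : Y} {m : ℕ} (hy : y ∈ piece ν m) :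
    blockOp μ ν k h y = ∑' n, k n m * ∫ x in piece μ n, h x ∂μ := by
  rw [blockOp, spanningSetsIndex_eq_of_mem ν hy]

lemma measurable_blockOp : Measurable (blockOp μ ν k h) :=
  Measurable.comp (g := fun m => ∑' n, k n m * ∫ x in piece μ n, h x ∂μ) measurable_from_nat
    (measurableSet_spanningSetsIndex ν)

lemma blockOp_congr (hh : h =ᵐ[μ] h') : blockOp μ ν k h = blockOp μ ν k h' := by
  have hint (n : ℕ) : ∫ x in piece μ n, h x ∂μ = ∫ x in piece μ n, h' x ∂μ :=
    integral_congr_ae (ae_restrict_of_ae hh)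
  ext y
  simp only [blockOp, hint]

lemma blockOp_smul (c : ℝ) (h : X → ℝ) : blockOp μ ν k (c • h) = c • blockOp μ ν k h := by
  ext y
  simp only [blockOp, Pi.smul_apply, smul_eq_mul, integral_const_mul, ← tsum_mul_left]
  exact tsum_congr fun n => by ring

lemma blockOp_term_nonneg (hk : ∀ n m, 0 ≤ k n m) (h0 : ∀ᵐ x ∂μ, 0 ≤ h x) (n m : ℕ) :
    0 ≤ k n m * ∫ x in piece μ n, h x ∂μ :=
  mul_nonneg (hk n m) (setIntegral_nonneg_ae (measurableSet_piece μ n) (h0.mono fun _ hx _ => hx))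

lemma blockOp_nonneg (hk : ∀ n m, 0 ≤ k n m) (h0 : ∀ᵐ x ∂μ, 0 ≤ h x) (y : Y) :
    0 ≤ blockOp μ ν k h y :=
  tsum_nonneg fun n => blockOp_term_nonneg hk h0 n _

lemma norm_setIntegral_piece_le {C : ℝ} (hC : ∀ᵐ x ∂μ, ‖h x‖ ≤ C) (n : ℕ) :
    ‖∫ x in piece μ n, h x ∂μ‖ ≤ C * weight μ n :=
  norm_setIntegral_le_of_norm_le_const_ae (measure_piece_ne_top μ n).lt_top (ae_restrict_of_ae hC)

lemma norm_blockOp_term_le (hk : ∀ n m, 0 ≤ k n m) {C : ℝ} (hC : ∀ᵐ x ∂μ, ‖h x‖ ≤ C)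
    (n m : ℕ) : ‖k n m * ∫ x in piece μ n, h x ∂μ‖ ≤ C * (k n m * weight μ n) := by
  rw [norm_mul, Real.norm_of_nonneg (hk n m), mul_left_comm]
  exact mul_le_mul_of_nonneg_left (norm_setIntegral_piece_le hC n) (hk n m)

variable (hk : IsStochasticKernel (weight μ) (weight ν) k)
include hk

lemma summable_blockOp_term (hh : MemLp h ⊤ μ) (m : ℕ) :
    Summable fun n => k n m * ∫ x in piece μ n, h x ∂μ :=
  .of_norm_bounded ((hk.summable m).mul_left _)
    (norm_blockOp_term_le hk.nonneg hh.ae_norm_le_toReal_eLpNorm_top · m)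

lemma norm_blockOp_le {C : ℝ} (hC0 : 0 ≤ C) (hC : ∀ᵐ x ∂μ, ‖h x‖ ≤ C) (y : Y) :
    ‖blockOp μ ν k h y‖ ≤ C := by
  obtain ⟨m, hy⟩ : ∃ m, y ∈ piece ν m := ⟨_, mem_piece_spanningSetsIndex ν y⟩
  rw [blockOp_of_mem hy]
  by_cases hm : weight ν m = 0
  · simpa only [hk.eq_zero _ _ hm, zero_mul, tsum_zero, norm_zero] using hC0
  simpa only [mul_one] using
    tsum_of_norm_bounded ((hk.hasSum m hm).mul_left C) (norm_blockOp_term_le hk.nonneg hC · m)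

lemma memLp_blockOp (hh : MemLp h ⊤ μ) : MemLp (blockOp μ ν k h) ⊤ ν :=
  memLp_top_of_bound measurable_blockOp.aestronglyMeasurable _
    (ae_of_all _ (norm_blockOp_le hk ENNReal.toReal_nonneg hh.ae_norm_le_toReal_eLpNorm_top))

lemma blockOp_add (hh : MemLp h ⊤ μ) (hh' : MemLp h' ⊤ μ) :
    blockOp μ ν k (h + h') = blockOp μ ν k h + blockOp μ ν k h' := by
  ext y
  rw [Pi.add_apply, blockOp, blockOp, blockOp,
    ← (summable_blockOp_term hk hh _).tsum_add (summable_blockOp_term hk hh' _)]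
  refine tsum_congr fun n => ?_
  rw [← mul_add, ← integral_add (integrableOn_piece hh n) (integrableOn_piece hh' n)]
  rfl

lemma blockOp_mono (hh : MemLp h ⊤ μ) (hh' : MemLp h' ⊤ μ) (hle : ∀ᵐ x ∂μ, h x ≤ h' x)
    (y : Y) : blockOp μ ν k h y ≤ blockOp μ ν k h' y :=
  Summable.tsum_le_tsum (fun n => mul_le_mul_of_nonneg_left
      (setIntegral_mono_ae (integrableOn_piece hh n) (integrableOn_piece hh' n) hle)
      (hk.nonneg _ _))
    (summable_blockOp_term hk hh _) (summable_blockOp_term hk hh' _)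

lemma blockOp_one : blockOp μ ν k (fun _ => 1) =ᵐ[ν] fun _ => 1 := by
  filter_upwards [ae_weight_spanningSetsIndex_ne_zero ν] with y hy
  simp only [blockOp, setIntegral_const, smul_eq_mul, mul_one]
  exact (hk.hasSum _ hy).tsum_eq

lemma lintegral_ofReal_blockOp_mul (hh : MemLp h ⊤ μ) (h0 : ∀ᵐ x ∂μ, 0 ≤ h x) (g : Y → ℝ) :
    ∫⁻ y, ENNReal.ofReal (blockOp μ ν k h y * g y) ∂ν =
      ∑' m, ∑' n, ENNReal.ofReal (k n m) * (∫⁻ x in piece μ n, ENNReal.ofReal (h x) ∂μ) *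
        ∫⁻ y in piece ν m, ENNReal.ofReal (g y) ∂ν := by
  rw [lintegral_eq_tsum_piece ν]
  refine tsum_congr fun m => ?_
  have hterm := blockOp_term_nonneg hk.nonneg h0 (m := m)
  calc ∫⁻ y in piece ν m, ENNReal.ofReal (blockOp μ ν k h y * g y) ∂ν
      = ∫⁻ y in piece ν m, ENNReal.ofReal (∑' n, k n m * ∫ x in piece μ n, h x ∂μ) *
          ENNReal.ofReal (g y) ∂ν :=
        setLIntegral_congr_fun (measurableSet_piece ν m) fun y hy => by
          rw [blockOp_of_mem hy, ENNReal.ofReal_mul (tsum_nonneg hterm)]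
    _ = ENNReal.ofReal (∑' n, k n m * ∫ x in piece μ n, h x ∂μ) *
          ∫⁻ y in piece ν m, ENNReal.ofReal (g y) ∂ν :=
        lintegral_const_mul' _ _ ENNReal.ofReal_ne_top
    _ = _ := by
        rw [ENNReal.ofReal_tsum_of_nonneg hterm (summable_blockOp_term hk hh m),
          ← ENNReal.tsum_mul_right]
        refine tsum_congr fun n => ?_
        rw [ENNReal.ofReal_mul (hk.nonneg n m), ofReal_integral_eq_lintegral_ofReal
          (integrableOn_piece hh n) (ae_restrict_of_ae h0)]

lemma lintegral_ofReal_blockOp_mul_eq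
    (hk' : IsStochasticKernel (weight ν) (weight μ) fun m n => k n m) {g : Y → ℝ}
    (hh : MemLp h ⊤ μ) (hg : MemLp g ⊤ ν) (h0 : ∀ᵐ x ∂μ, 0 ≤ h x)
    (g0 : ∀ᵐ y ∂ν, 0 ≤ g y) :
    ∫⁻ y, ENNReal.ofReal (blockOp μ ν k h y * g y) ∂ν =
      ∫⁻ x, ENNReal.ofReal (h x * blockOp ν μ (fun m n => k n m) g x) ∂μ := by
  simp_rw [mul_comm (h _)]
  rw [lintegral_ofReal_blockOp_mul hk hh h0, lintegral_ofReal_blockOp_mul hk' hg g0,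
    ENNReal.tsum_comm]
  exact tsum_congr fun n => tsum_congr fun m => by ring

lemma lintegral_ofReal_blockOp (hk' : IsStochasticKernel (weight ν) (weight μ) fun m n => k n m)
    (hh : MemLp h ⊤ μ) (h0 : ∀ᵐ x ∂μ, 0 ≤ h x) :
    ∫⁻ y, ENNReal.ofReal (blockOp μ ν k h y) ∂ν = ∫⁻ x, ENNReal.ofReal (h x) ∂μ := by
  have hdual := lintegral_ofReal_blockOp_mul_eq hk hk' hh (memLp_top_const 1) h0
    (ae_of_all _ fun _ => zero_le_one)
  simp only [mul_one] at hdual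
  rw [hdual]
  exact lintegral_congr_ae ((blockOp_one hk').mono fun x hx => by simp only [hx, mul_one])

end BlockOperator

section Lp

variable {X Y : Type*} [MeasurableSpace X] [MeasurableSpace Y] {μ : Measure X} {ν : Measure Y}
  [SigmaFinite μ] [SigmaFinite ν] {k : ℕ → ℕ → ℝ}
  (hk : IsStochasticKernel (weight μ) (weight ν) k)

noncomputable def blockLp : Lp ℝ ⊤ μ →ₗ[ℝ] Lp ℝ ⊤ ν where
  toFun h := MemLp.toLp _ (memLp_blockOp hk (Lp.memLp h))
  map_add' h h' := by
    rw [← MemLp.toLp_add]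
    refine MemLp.toLp_congr _ _ (.of_eq ?_)
    rw [blockOp_congr (ν := ν) (Lp.coeFn_add h h'), blockOp_add hk (Lp.memLp h) (Lp.memLp h')]
  map_smul' c h := by
    rw [RingHom.id_apply, ← MemLp.toLp_const_smul]
    refine MemLp.toLp_congr _ _ (.of_eq ?_)
    rw [blockOp_congr (ν := ν) (Lp.coeFn_smul c h), blockOp_smul]

lemma coeFn_blockLp (h : Lp ℝ ⊤ μ) : blockLp hk h =ᵐ[ν] blockOp μ ν k h :=
  MemLp.coeFn_toLp (memLp_blockOp hk (Lp.memLp h))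

lemma blockLp_nonneg (h : Lp ℝ ⊤ μ) (h0 : ∀ᵐ x ∂μ, 0 ≤ h x) : ∀ᵐ y ∂ν, 0 ≤ blockLp hk h y :=
  (coeFn_blockLp hk h).mono fun y hy => hy ▸ blockOp_nonneg hk.nonneg h0 y

lemma blockLp_ae_eq_one (h : Lp ℝ ⊤ μ) (h1 : h =ᵐ[μ] fun _ => (1 : ℝ)) :
    blockLp hk h =ᵐ[ν] fun _ => (1 : ℝ) := by
  filter_upwards [coeFn_blockLp hk h, blockOp_one hk] with y hy hone
  rwa [hy, blockOp_congr (ν := ν) h1]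

lemma blockLp_le_one (h : Lp ℝ ⊤ μ) (hle : ∀ᵐ x ∂μ, h x ≤ 1) : ∀ᵐ y ∂ν, blockLp hk h y ≤ 1 := by
  filter_upwards [coeFn_blockLp hk h, blockOp_one hk] with y hy h1
  rw [hy, ← h1]
  exact blockOp_mono hk (Lp.memLp h) (memLp_top_const 1) hle y

variable (hk' : IsStochasticKernel (weight ν) (weight μ) fun m n => k n m)
include hk'

lemma lintegral_ofReal_blockLp (h : Lp ℝ ⊤ μ) (h0 : ∀ᵐ x ∂μ, 0 ≤ h x) :
    ∫⁻ y, ENNReal.ofReal (blockLp hk h y) ∂ν = ∫⁻ x, ENNReal.ofReal (h x) ∂μ := by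
  rw [← lintegral_ofReal_blockOp hk hk' (Lp.memLp h) h0]
  exact lintegral_congr_ae ((coeFn_blockLp hk h).mono fun y hy => by simp only [hy])

lemma lintegral_ofReal_blockLp_mul (h : Lp ℝ ⊤ μ) (g : Lp ℝ ⊤ ν) (h0 : ∀ᵐ x ∂μ, 0 ≤ h x)
    (g0 : ∀ᵐ y ∂ν, 0 ≤ g y) :
    ∫⁻ y, ENNReal.ofReal (blockLp hk h y * g y) ∂ν =
      ∫⁻ x, ENNReal.ofReal (h x * blockLp hk' g x) ∂μ := by
  calc ∫⁻ y, ENNReal.ofReal (blockLp hk h y * g y) ∂ν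
      = ∫⁻ y, ENNReal.ofReal (blockOp μ ν k h y * g y) ∂ν :=
        lintegral_congr_ae <| (coeFn_blockLp hk h).mono fun y hy => by simp only [hy]
    _ = ∫⁻ x, ENNReal.ofReal (h x * blockOp ν μ (fun m n => k n m) g x) ∂μ :=
        lintegral_ofReal_blockOp_mul_eq hk hk' (Lp.memLp h) (Lp.memLp g) h0 g0
    _ = ∫⁻ x, ENNReal.ofReal (h x * blockLp hk' g x) ∂μ :=
        lintegral_congr_ae <| (coeFn_blockLp hk' g).mono fun x hx => by simp only [hx]

end Lp

noncomputable def _root_.DSSPair.ofKernel {X Y : Type*} [MeasurableSpace X] [MeasurableSpace Y]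
    {μ : Measure X} {ν : Measure Y} [SigmaFinite μ] [SigmaFinite ν] {k : ℕ → ℕ → ℝ}
    (hk : IsStochasticKernel (weight μ) (weight ν) k)
    (hk' : IsStochasticKernel (weight ν) (weight μ) fun m n => k n m) : DSSPair μ ν where
  T := blockLp hk
  T' := blockLp hk'
  posT := blockLp_nonneg hk
  posT' := blockLp_nonneg hk'
  subT := blockLp_le_one hk
  subT' := blockLp_le_one hk'
  subintT h h0 := (lintegral_ofReal_blockLp hk hk' h h0).le
  subintT' g g0 := (lintegral_ofReal_blockLp hk' hk g g0).le
  duality := lintegral_ofReal_blockLp_mul hk hk'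

lemma lintegral_ofReal_of_ae_eq_one {X : Type*} [MeasurableSpace X] {μ : Measure X} {f : X → ℝ}
    (hf : f =ᵐ[μ] fun _ => 1) : ∫⁻ x, ENNReal.ofReal (f x) ∂μ = μ univ := by
  calc ∫⁻ x, ENNReal.ofReal (f x) ∂μ = ∫⁻ _, 1 ∂μ :=
        lintegral_congr_ae <| hf.mono fun x hx => by simp only [hx, ENNReal.ofReal_one]
    _ = μ univ := lintegral_one

theorem measure_univ_eq_of_unital_of_lintegral_eq {X Y : Type*} [MeasurableSpace X]
    [MeasurableSpace Y] {μ : Measure X} {ν : Measure Y} (T : Lp ℝ ⊤ μ → Lp ℝ ⊤ ν)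
    (hunital : ∀ h : Lp ℝ ⊤ μ, (⇑h =ᵐ[μ] fun _ => (1 : ℝ)) → ⇑(T h) =ᵐ[ν] fun _ => (1 : ℝ))
    (hint : ∀ h : Lp ℝ ⊤ μ, (∀ᵐ x ∂μ, 0 ≤ h x) →
      ∫⁻ y, ENNReal.ofReal (T h y) ∂ν = ∫⁻ x, ENNReal.ofReal (h x) ∂μ) :
    μ univ = ν univ := by
  let one : Lp ℝ ⊤ μ := (memLp_top_const (1 : ℝ)).toLp _
  have h1 : one =ᵐ[μ] fun _ => (1 : ℝ) := MemLp.coeFn_toLp _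
  rw [← lintegral_ofReal_of_ae_eq_one h1, ← hint one (h1.mono fun x hx => hx ▸ zero_le_one),
    lintegral_ofReal_of_ae_eq_one (hunital one h1)]

theorem exists_isStochasticKernel_of_measure_univ_eq {X Y : Type*} [MeasurableSpace X]
    [MeasurableSpace Y] {μ : Measure X} {ν : Measure Y} [SigmaFinite μ] [SigmaFinite ν]
    (H : μ univ = ν univ) :
    ∃ k, IsStochasticKernel (weight μ) (weight ν) k ∧
      IsStochasticKernel (weight ν) (weight μ) fun m n => k n m := by
  refine exists_isStochasticKernel_of_tsum_eq (measure_piece_ne_top μ) (measure_piece_ne_top ν) ?_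
  rw [tsum_measure_piece, tsum_measure_piece, H]

end DoublyStochastic

/-- Between two σ-finite measure spaces, a doubly stochastic map (unital and
integral-preserving doubly substochastic map) exists if and only if the total measures
agree: `DS(M → N) ≠ ∅ ↔ μ(X) = ν(Y)`. -/
theorem stmt9 {X Y : Type*} [MeasurableSpace X] [MeasurableSpace Y]
    (μ : Measure X) (ν : Measure Y) [SigmaFinite μ] [SigmaFinite ν] :
    (∃ D : DSSPair μ ν,
      (∀ h : Lp ℝ ⊤ μ, (⇑h =ᵐ[μ] fun _ => (1 : ℝ)) →
        ⇑(D.T h) =ᵐ[ν] fun _ => (1 : ℝ)) ∧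
      (∀ h : Lp ℝ ⊤ μ, (∀ᵐ x ∂μ, 0 ≤ h x) →
        ∫⁻ y, ENNReal.ofReal ((D.T h) y) ∂ν = ∫⁻ x, ENNReal.ofReal (h x) ∂μ)) ↔
    μ Set.univ = ν Set.univ := by
  refine ⟨fun ⟨D, hunital, hint⟩ =>
    DoublyStochastic.measure_univ_eq_of_unital_of_lintegral_eq D.T hunital hint, fun H => ?_⟩
  obtain ⟨k, hk, hk'⟩ := DoublyStochastic.exists_isStochasticKernel_of_measure_univ_eq H
  exact ⟨.ofKernel hk hk', DoublyStochastic.blockLp_ae_eq_one hk,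
    DoublyStochastic.lintegral_ofReal_blockLp hk hk'⟩
end

section
/- Let M be a von Neumann algebra acting on a Hilbert space H and T : M → M a normal unital completely positive map. If T admits a normal unital completely positive extension T̃ : B(H) → B(H) that restricts to the identity on the commutant M′, then T is inner: there exist operators k_α ∈ M with Σ k_α* k_α = 1 and T(a) = Σ k_α* a k_α for all a ∈ M. -/
/-!
Write `T̃ = Σ k_α* (·) k_α`. For every operator `y`,
`Σ_α ‖[k_α, y] x‖² = ⟪y x, T̃(1) y x⟫ + ⟪x, T̃(y* y) x⟫ - ⟪y x, T̃(y) x⟫ - ⟪x, T̃(y*) y x⟫`,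
and for `y ∈ M′` the right-hand side vanishes because `T̃` is unital and fixes `M′`, a
`*`-algebra. Hence every `k_α` commutes with `M′`, i.e. lies in `M″ = M`; the Kraus form of
`T̃` restricted to `M` is the required one, and `T̃(1) = 1` gives `Σ k_α* k_α = 1`.
-/

open scoped InnerProductSpace

section KrausCommutator

variable {𝕜 H : Type*} [RCLike 𝕜] [NormedAddCommGroup H] [InnerProductSpace 𝕜 H]
  [CompleteSpace H]

theorem norm_sq_commutator_apply (k y : H →L[𝕜] H) (x : H) :
    ((‖(k * y - y * k) x‖ ^ 2 : ℝ) : 𝕜) =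
      ⟪y x, (star k * 1 * k) (y x)⟫_𝕜 + ⟪x, (star k * (star y * y) * k) x⟫_𝕜
        - ⟪y x, (star k * y * k) x⟫_𝕜 - ⟪x, (star k * star y * k) (y x)⟫_𝕜 := by
  rw [RCLike.ofReal_pow, ← inner_self_eq_norm_sq_to_K]
  simp only [sub_apply, mul_apply_eq_comp, one_apply_eq_self, ContinuousLinearMap.star_eq_adjoint,
    ContinuousLinearMap.adjoint_inner_right, inner_sub_left, inner_sub_right]
  ring

variable {ι : Type*} {k : ι → H →L[𝕜] H} {T : (H →L[𝕜] H) → H →L[𝕜] H}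

theorem hasSum_norm_sq_commutator_apply
    (hk : ∀ a x z, HasSum (fun α => ⟪x, (star (k α) * a * k α) z⟫_𝕜) ⟪x, T a z⟫_𝕜)
    (y : H →L[𝕜] H) (x : H) :
    HasSum (fun α => ((‖(k α * y - y * k α) x‖ ^ 2 : ℝ) : 𝕜))
      (⟪y x, T 1 (y x)⟫_𝕜 + ⟪x, T (star y * y) x⟫_𝕜
        - ⟪y x, T y x⟫_𝕜 - ⟪x, T (star y) (y x)⟫_𝕜) := by
  simp only [norm_sq_commutator_apply]
  exact (((hk 1 _ _).add (hk _ x x)).sub (hk y _ x)).sub (hk _ x _)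

theorem commute_of_kraus_of_fixed
    (hk : ∀ a x z, HasSum (fun α => ⟪x, (star (k α) * a * k α) z⟫_𝕜) ⟪x, T a z⟫_𝕜)
    (h1 : T 1 = 1) {y : H →L[𝕜] H} (hy : T y = y) (hy_star : T (star y) = star y)
    (hy_star_mul : T (star y * y) = star y * y) (α : ι) :
    Commute (k α) y := by
  have hzero : ∀ x, HasSum (fun α => ‖(k α * y - y * k α) x‖ ^ 2) 0 := fun x => by
    have h := hasSum_norm_sq_commutator_apply hk y x
    rw [h1, hy, hy_star, hy_star_mul] at h
    refine (RCLike.hasSum_ofReal 𝕜).mp ?_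
    convert h using 1
    simp [ContinuousLinearMap.star_eq_adjoint, ContinuousLinearMap.adjoint_inner_right]
  refine sub_eq_zero.mp (ContinuousLinearMap.ext fun x => ?_)
  have := congrFun ((hasSum_zero_iff_of_nonneg fun β => sq_nonneg _).mp (hzero x)) α
  simpa using this

end KrausCommutator

/-- Normality and complete positivity of `Tt` are encoded by its Kraus decomposition, the
sums converging in the weak operator topology. -/
theorem stmt11_general {H : Type} [NormedAddCommGroup H] [InnerProductSpace ℂ H]
    [CompleteSpace H] (M : VonNeumannAlgebra H)
    (Tt : (H →L[ℂ] H) →ₗ[ℂ] (H →L[ℂ] H))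
    (hunital : Tt 1 = 1)
    (hKraus : ∃ (ι : Type) (k : ι → H →L[ℂ] H),
      ∀ (a : H →L[ℂ] H) (x y : H),
        HasSum (fun α => (inner ℂ x ((star (k α) * a * k α) y) : ℂ))
          (inner ℂ x (Tt a y)))
    (hcomm : ∀ y ∈ M.commutant, Tt y = y) :
    ∃ (ι : Type) (k : ι → H →L[ℂ] H), (∀ α, k α ∈ M) ∧
      (∀ x y : H, HasSum (fun α => (inner ℂ x ((star (k α) * k α) y) : ℂ))
        (inner ℂ x y)) ∧
      (∀ a ∈ M, ∀ x y : H,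
        HasSum (fun α => (inner ℂ x ((star (k α) * a * k α) y) : ℂ))
          (inner ℂ x (Tt a y))) := by
  obtain ⟨ι, k, hk⟩ := hKraus
  have h_one : ∀ x y : H, HasSum (fun α => ⟪x, (star (k α) * k α) y⟫_ℂ) ⟪x, y⟫_ℂ := by
    intro x y
    simpa [hunital] using hk 1 x y
  refine ⟨ι, k, fun α => ?_, h_one, fun a _ => hk a⟩
  rw [← M.commutant_commutant, VonNeumannAlgebra.mem_commutant_iff]
  intro y hy
  have hy_star : star y ∈ M.commutant := star_mem hy
  exact (commute_of_kraus_of_fixed hk hunital (hcomm y hy) (hcomm _ hy_star)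
    (hcomm _ (mul_mem hy_star hy)) α).symm

/-- If a normal unital completely positive map `T` on a von Neumann algebra `M ⊆ B(H)`
admits a normal unital completely positive extension `T̃` to `B(H)` restricting to the
identity on the commutant `M′`, then `T` is inner: it admits a Kraus decomposition
`T(a) = Σ k_α* a k_α` with Kraus operators `k_α ∈ M` satisfying `Σ k_α* k_α = 1`.
(Normality and complete positivity of the extension are encoded by the existence of a
Kraus decomposition, the sums converging in the weak operator topology.) -/
theorem stmt11 {H : Type} [NormedAddCommGroup H] [InnerProductSpace ℂ H]
    [CompleteSpace H] (M : VonNeumannAlgebra H)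
    (Tt : (H →L[ℂ] H) →ₗ[ℂ] (H →L[ℂ] H))
    (hM : ∀ a ∈ M, Tt a ∈ M)
    (hunital : Tt 1 = 1)
    (hKraus : ∃ (ι : Type) (k : ι → H →L[ℂ] H),
      ∀ (a : H →L[ℂ] H) (x y : H),
        HasSum (fun α => (inner ℂ x ((star (k α) * a * k α) y) : ℂ))
          (inner ℂ x (Tt a y)))
    (hcomm : ∀ y ∈ M.commutant, Tt y = y) :
    ∃ (ι : Type) (k : ι → H →L[ℂ] H), (∀ α, k α ∈ M) ∧
      (∀ x y : H, HasSum (fun α => (inner ℂ x ((star (k α) * k α) y) : ℂ))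
        (inner ℂ x y)) ∧
      (∀ a ∈ M, ∀ x y : H,
        HasSum (fun α => (inner ℂ x ((star (k α) * a * k α) y) : ℂ))
          (inner ℂ x (Tt a y))) :=
  stmt11_general M Tt hunital hKraus hcomm
end

section
/- Let (M, Tr) be a semifinite von Neumann algebra (or a σ-finite measure space). If (ρ_n) is a sequence in L¹(M)⁺ converging in L¹ norm to ρ, then Tr(supp ρ) ≤ liminf_n Tr(supp ρ_n), i.e., the trace of the support projection is lower semicontinuous with respect to L¹ convergence. In the commutative case: if f_n → f in L¹(X,μ) with f_n, f ≥ 0, then μ(supp f) ≤ liminf μ(supp f_n). -/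
/-!
`L¹` convergence implies convergence in measure, so along any subsequence a further subsequence
converges almost everywhere. Almost-everywhere convergence puts `supp f` inside the `liminf` of the
supports up to a null set (`{0}ᶜ` is open), and Fatou's lemma for sets,
`μ (liminf sₙ) ≤ liminf μ sₙ`, gives the bound. Choosing first a subsequence along which
`μ (supp fₙ)` stays below a value `c` above the `liminf` closes the argument.
-/

open MeasureTheory Filter Topology

namespace MeasureTheory

variable {α E : Type*} [MeasurableSpace α] {μ : Measure α}

theorem measure_liminf_le_liminf_measure (s : ℕ → Set α) :
    μ (liminf s atTop) ≤ liminf (fun n => μ (s n)) atTop := by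
  have hmono : Monotone fun n => ⋂ i ≥ n, s i :=
    fun _ _ hkl => Set.biInter_mono (fun _ hi => hkl.trans hi) fun _ _ => le_rfl
  rw [liminf_eq_iSup_iInf_of_nat, liminf_eq_iSup_iInf_of_nat]
  simp only [Set.iSup_eq_iUnion, Set.iInf_eq_iInter]
  rw [hmono.measure_iUnion]
  exact iSup_mono fun n => le_iInf₂ fun i hi => measure_mono (Set.biInter_subset_of_mem hi)

theorem support_ae_le_liminf_support_of_ae_tendsto [TopologicalSpace E] [T1Space E] [Zero E]
    {f : α → E} {fs : ℕ → α → E}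
    (h : ∀ᵐ x ∂μ, Tendsto (fun n => fs n x) atTop (𝓝 (f x))) :
    Function.support f ≤ᵐ[μ] (liminf (fun n => Function.support (fs n)) atTop : Set α) := by
  filter_upwards [h] with x hx hfx
  exact mem_liminf_iff_eventually_mem.2 (hx (isOpen_compl_singleton.mem_nhds hfx))

theorem measure_support_le_liminf_of_ae_tendsto [TopologicalSpace E] [T1Space E] [Zero E]
    {f : α → E} {fs : ℕ → α → E}
    (h : ∀ᵐ x ∂μ, Tendsto (fun n => fs n x) atTop (𝓝 (f x))) :
    μ (Function.support f) ≤ liminf (fun n => μ (Function.support (fs n))) atTop :=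
  (measure_mono_ae (support_ae_le_liminf_support_of_ae_tendsto h)).trans
    (measure_liminf_le_liminf_measure _)

theorem TendstoInMeasure.measure_support_le_liminf [PseudoEMetricSpace E] [T1Space E] [Zero E]
    {f : α → E} {fs : ℕ → α → E} (h : TendstoInMeasure μ fs atTop f) :
    μ (Function.support f) ≤ liminf (fun n => μ (Function.support (fs n))) atTop := by
  refine le_of_forall_gt_imp_ge_of_dense fun c hc => ?_
  obtain ⟨φ, hφ, hφc⟩ := extraction_of_frequently_atTop
    (frequently_lt_of_liminf_lt (by isBoundedDefault) hc)
  obtain ⟨ψ, -, hψ⟩ := (h.comp hφ.tendsto_atTop).exists_seq_tendsto_ae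
  calc μ (Function.support f)
      ≤ liminf (fun k => μ (Function.support (fs (φ (ψ k))))) atTop :=
        measure_support_le_liminf_of_ae_tendsto hψ
    _ ≤ c := liminf_le_of_frequently_le' (Frequently.of_forall fun k => (hφc (ψ k)).le)

theorem tendstoInMeasure_of_tendsto_integral_norm_sub [NormedAddCommGroup E] {ι : Type*}
    {l : Filter ι} {f : α → E} {fs : ι → α → E} (hf : Integrable f μ)
    (hfs : ∀ i, Integrable (fs i) μ)
    (h : Tendsto (fun i => ∫ x, ‖fs i x - f x‖ ∂μ) l (𝓝 0)) :
    TendstoInMeasure μ fs l f := by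
  have heLpNorm (i : ι) :
      eLpNorm (fs i - f) 1 μ = ENNReal.ofReal (∫ x, ‖fs i x - f x‖ ∂μ) := by
    rw [eLpNorm_one_eq_lintegral_enorm,
      ← ofReal_integral_norm_eq_lintegral_enorm ((hfs i).sub hf)]
    rfl
  refine tendstoInMeasure_of_tendsto_eLpNorm one_ne_zero (fun i => (hfs i).aestronglyMeasurable)
    hf.aestronglyMeasurable ?_
  simpa only [heLpNorm, ENNReal.ofReal_zero, Function.comp_def] using
    (ENNReal.continuous_ofReal.tendsto 0).comp h

end MeasureTheory

theorem stmt18_general {X : Type*} [MeasurableSpace X] (μ : Measure X)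
    (f : X → ℝ) (fs : ℕ → X → ℝ)
    (hf : Integrable f μ) (hfs : ∀ n, Integrable (fs n) μ)
    (hconv : Tendsto (fun n => ∫ x, |fs n x - f x| ∂μ) atTop (nhds 0)) :
    μ (Function.support f) ≤ atTop.liminf fun n => μ (Function.support (fs n)) :=
  (tendstoInMeasure_of_tendsto_integral_norm_sub hf hfs hconv).measure_support_le_liminf

/-- Lower semicontinuity of the measure of the support under `L¹` convergence
(commutative case): if `f_n → f` in `L¹(X,μ)` with all functions nonnegative, then
`μ(supp f) ≤ liminf_n μ(supp f_n)`. -/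
theorem stmt18 {X : Type*} [MeasurableSpace X] (μ : Measure X) [SigmaFinite μ]
    (f : X → ℝ) (fs : ℕ → X → ℝ)
    (hf : Integrable f μ) (hfs : ∀ n, Integrable (fs n) μ)
    (hfpos : ∀ x, 0 ≤ f x) (hfspos : ∀ n x, 0 ≤ fs n x)
    (hconv : Tendsto (fun n => ∫ x, |fs n x - f x| ∂μ) atTop (nhds 0)) :
    μ (Function.support f) ≤ atTop.liminf fun n => μ (Function.support (fs n)) :=
  stmt18_general μ f fs hf hfs hconv
end
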